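/- arXiv:1104.2979 — 5 statements merged into one kernel-verified Lean document; each statement's English description precedes it below -/
import Mathlib

section
/- Let K be a perfect subset of ℂ and B a complex Banach space. If λ ∈ C¹_hol(K,ℂ) and φ ∈ C¹_hol(K,B), then the pointwise product λ·φ belongs to C¹_hol(K,B) and ‖λ·φ‖_{K,B} ≤ ‖λ‖_{K,ℂ} · ‖φ‖_{K,B}. Moreover, the constant function 1, viewed as an element of C¹_hol(K,ℂ), has norm ‖1‖_{K,ℂ} = 1. -/
noncomputable section

variable {B : Type*} [NormedAddCommGroup B] [NormedSpace ℂ B]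

/-- The difference-quotient error function `Ω_{f,g}(q,q') = (f(q')−f(q))/(q'−q) − g(q)`. -/
def omega0 (f g : ℂ → B) (p : ℂ × ℂ) : B :=
  if p.1 = p.2 then 0 else (p.2 - p.1)⁻¹ • (f p.2 - f p.1) - g p.1

/-- `f` is `C¹`-holomorphic on `K` with derivative `g`. -/
def IsC1HolPair (K : Set ℂ) (f g : ℂ → B) : Prop :=
  ContinuousOn f K ∧ ContinuousOn g K ∧ ContinuousOn (omega0 f g) (K ×ˢ K)

def n0 (K : Set ℂ) (f : ℂ → B) : ℝ := sSup ((fun q => ‖f q‖) '' K)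
def ndel (K : Set ℂ) (f : ℂ → B) : ℝ :=
  sSup ((fun p : ℂ × ℂ => ‖f p.2 - f p.1‖) '' (K ×ˢ K))
def n2 (K : Set ℂ) (f g : ℂ → B) : ℝ := sSup ((fun p => ‖omega0 f g p‖) '' (K ×ˢ K))

/-- The `C¹_hol` norm `n₀ + n₁ + n₂`. -/
def c1Norm (K : Set ℂ) (f g : ℂ → B) : ℝ := n0 K f + max (n0 K g) (ndel K f) + n2 K f g

/-- Finiteness of the `C¹_hol` norm. -/
def C1Bdd (K : Set ℂ) (f g : ℂ → B) : Prop :=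
  BddAbove ((fun q => ‖f q‖) '' K) ∧ BddAbove ((fun q => ‖g q‖) '' K) ∧
    BddAbove ((fun p : ℂ × ℂ => ‖f p.2 - f p.1‖) '' (K ×ˢ K)) ∧
    BddAbove ((fun p => ‖omega0 f g p‖) '' (K ×ˢ K))

/-- Product rule identity for the difference-quotient error function. -/
lemma omega0_smul_eq (lam lam' : ℂ → ℂ) (φ φ' : ℂ → B) :
    omega0 (fun q => lam q • φ q) (fun q => lam q • φ' q + lam' q • φ q) =
      fun p => lam p.2 • omega0 φ φ' p + (omega0 lam lam' p) • φ p.1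
        + (lam p.2 - lam p.1) • φ' p.1 := by
  funext p
  obtain ⟨q, q'⟩ := p
  simp only [omega0]
  split_ifs with h
  · subst h; simp
  · simp only [smul_eq_mul]
    module

lemma sSup_image_nonneg {α : Type*} (s : Set α) (f : α → B) :
    0 ≤ sSup ((fun x => ‖f x‖) '' s) :=
  Real.sSup_nonneg (by rintro _ ⟨x, _, rfl⟩; exact norm_nonneg _)

/-- If `λ ∈ C¹_hol(K,ℂ)` (with derivative `λ'`) and
`φ ∈ C¹_hol(K,B)` (with derivative `φ'`), then `λ·φ ∈ C¹_hol(K,B)` with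
derivative `λ·φ' + λ'·φ` and `‖λ·φ‖_{K,B} ≤ ‖λ‖_K · ‖φ‖_{K,B}`; moreover the
constant function `1 ∈ C¹_hol(K,ℂ)` has norm `1`. -/
theorem c1Hol_smul_norm_le (K : Set ℂ) (hK : Perfect K) (hKne : K.Nonempty)
    (lam lam' : ℂ → ℂ) (φ φ' : ℂ → B)
    (hlam : IsC1HolPair K lam lam') (hlamb : C1Bdd K lam lam')
    (hφ : IsC1HolPair K φ φ') (hφb : C1Bdd K φ φ') :
    IsC1HolPair K (fun q => lam q • φ q) (fun q => lam q • φ' q + lam' q • φ q) ∧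
    C1Bdd K (fun q => lam q • φ q) (fun q => lam q • φ' q + lam' q • φ q) ∧
    c1Norm K (fun q => lam q • φ q) (fun q => lam q • φ' q + lam' q • φ q) ≤
      c1Norm K lam lam' * c1Norm K φ φ' ∧
    c1Norm K (fun _ : ℂ => (1 : ℂ)) (fun _ : ℂ => (0 : ℂ)) = 1 := by
  obtain ⟨hlc, hl'c, hlΩ⟩ := hlam
  obtain ⟨hfc, hf'c, hfΩ⟩ := hφ
  obtain ⟨bl0, bl1, bld, bl2⟩ := hlamb
  obtain ⟨bf0, bf1, bfd, bf2⟩ := hφb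
  set a0 := n0 K lam with ha0def
  set a1 := max (n0 K lam') (ndel K lam) with ha1def
  set a2 := n2 K lam lam' with ha2def
  set b0 := n0 K φ with hb0def
  set b1 := max (n0 K φ') (ndel K φ) with hb1def
  set b2 := n2 K φ φ' with hb2def
  -- nonnegativity
  have a0n : 0 ≤ a0 := sSup_image_nonneg K lam
  have a1n : 0 ≤ a1 := le_trans (sSup_image_nonneg K lam') (le_max_left _ _)
  have a2n : 0 ≤ a2 := Real.sSup_nonneg (by rintro _ ⟨p, _, rfl⟩; exact norm_nonneg _)
  have b0n : 0 ≤ b0 := sSup_image_nonneg K φ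
  have b1n : 0 ≤ b1 := le_trans (sSup_image_nonneg K φ') (le_max_left _ _)
  have b2n : 0 ≤ b2 := Real.sSup_nonneg (by rintro _ ⟨p, _, rfl⟩; exact norm_nonneg _)
  -- pointwise bounds
  have hA0 : ∀ q ∈ K, ‖lam q‖ ≤ a0 := fun q hq => le_csSup bl0 ⟨q, hq, rfl⟩
  have hA1 : ∀ q ∈ K, ‖lam' q‖ ≤ a1 :=
    fun q hq => le_trans (le_csSup bl1 ⟨q, hq, rfl⟩) (le_max_left _ _)
  have hAd : ∀ p ∈ K ×ˢ K, ‖lam p.2 - lam p.1‖ ≤ a1 :=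
    fun p hp => le_trans (le_csSup bld ⟨p, hp, rfl⟩) (le_max_right _ _)
  have hA2 : ∀ p ∈ K ×ˢ K, ‖omega0 lam lam' p‖ ≤ a2 := fun p hp => le_csSup bl2 ⟨p, hp, rfl⟩
  have hB0 : ∀ q ∈ K, ‖φ q‖ ≤ b0 := fun q hq => le_csSup bf0 ⟨q, hq, rfl⟩
  have hB1 : ∀ q ∈ K, ‖φ' q‖ ≤ b1 :=
    fun q hq => le_trans (le_csSup bf1 ⟨q, hq, rfl⟩) (le_max_left _ _)
  have hBd : ∀ p ∈ K ×ˢ K, ‖φ p.2 - φ p.1‖ ≤ b1 :=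
    fun p hp => le_trans (le_csSup bfd ⟨p, hp, rfl⟩) (le_max_right _ _)
  have hB2 : ∀ p ∈ K ×ˢ K, ‖omega0 φ φ' p‖ ≤ b2 := fun p hp => le_csSup bf2 ⟨p, hp, rfl⟩
  -- pointwise bounds for the product
  have P0 : ∀ q ∈ K, ‖lam q • φ q‖ ≤ a0 * b0 := by
    intro q hq
    rw [norm_smul]
    exact mul_le_mul (hA0 q hq) (hB0 q hq) (norm_nonneg _) a0n
  have P1 : ∀ q ∈ K, ‖lam q • φ' q + lam' q • φ q‖ ≤ a0 * b1 + a1 * b0 := by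
    intro q hq
    calc ‖lam q • φ' q + lam' q • φ q‖ ≤ ‖lam q • φ' q‖ + ‖lam' q • φ q‖ := norm_add_le _ _
      _ = ‖lam q‖ * ‖φ' q‖ + ‖lam' q‖ * ‖φ q‖ := by rw [norm_smul, norm_smul]
      _ ≤ a0 * b1 + a1 * b0 := by
          gcongr
          exacts [hA0 q hq, hB1 q hq, hA1 q hq, hB0 q hq]
  have Pd : ∀ p ∈ K ×ˢ K, ‖lam p.2 • φ p.2 - lam p.1 • φ p.1‖ ≤ a0 * b1 + a1 * b0 := by
    intro p hp
    have hid : lam p.2 • φ p.2 - lam p.1 • φ p.1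
        = lam p.2 • (φ p.2 - φ p.1) + (lam p.2 - lam p.1) • φ p.1 := by module
    rw [hid]
    calc ‖lam p.2 • (φ p.2 - φ p.1) + (lam p.2 - lam p.1) • φ p.1‖
        ≤ ‖lam p.2 • (φ p.2 - φ p.1)‖ + ‖(lam p.2 - lam p.1) • φ p.1‖ := norm_add_le _ _
      _ = ‖lam p.2‖ * ‖φ p.2 - φ p.1‖ + ‖lam p.2 - lam p.1‖ * ‖φ p.1‖ := by
          rw [norm_smul, norm_smul]
      _ ≤ a0 * b1 + a1 * b0 := by
          gcongr
          exacts [hA0 p.2 hp.2, hBd p hp, hAd p hp, hB0 p.1 hp.1]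
  have P2 : ∀ p ∈ K ×ˢ K,
      ‖omega0 (fun q => lam q • φ q) (fun q => lam q • φ' q + lam' q • φ q) p‖
        ≤ a0 * b2 + a2 * b0 + a1 * b1 := by
    intro p hp
    rw [omega0_smul_eq]
    calc ‖lam p.2 • omega0 φ φ' p + (omega0 lam lam' p) • φ p.1
            + (lam p.2 - lam p.1) • φ' p.1‖
        ≤ ‖lam p.2 • omega0 φ φ' p‖ + ‖(omega0 lam lam' p) • φ p.1‖
            + ‖(lam p.2 - lam p.1) • φ' p.1‖ := norm_add₃_le
      _ = ‖lam p.2‖ * ‖omega0 φ φ' p‖ + ‖omega0 lam lam' p‖ * ‖φ p.1‖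
            + ‖lam p.2 - lam p.1‖ * ‖φ' p.1‖ := by rw [norm_smul, norm_smul, norm_smul]
      _ ≤ a0 * b2 + a2 * b0 + a1 * b1 := by
          gcongr
          exacts [hA0 p.2 hp.2, hB2 p hp, hA2 p hp, hB0 p.1 hp.1, hAd p hp, hB1 p.1 hp.1]
  -- continuity
  have hsnd : ContinuousOn (fun p : ℂ × ℂ => lam p.2) (K ×ˢ K) :=
    hlc.comp continuous_snd.continuousOn (fun p hp => hp.2)
  have hfst : ContinuousOn (fun p : ℂ × ℂ => lam p.1) (K ×ˢ K) :=
    hlc.comp continuous_fst.continuousOn (fun p hp => hp.1)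
  have hφfst : ContinuousOn (fun p : ℂ × ℂ => φ p.1) (K ×ˢ K) :=
    hfc.comp continuous_fst.continuousOn (fun p hp => hp.1)
  have hφ'fst : ContinuousOn (fun p : ℂ × ℂ => φ' p.1) (K ×ˢ K) :=
    hf'c.comp continuous_fst.continuousOn (fun p hp => hp.1)
  refine ⟨⟨hlc.smul hfc, (hlc.smul hf'c).add (hl'c.smul hfc), ?_⟩,
      ⟨⟨a0 * b0, by rintro _ ⟨q, hq, rfl⟩; exact P0 q hq⟩,
       ⟨a0 * b1 + a1 * b0, by rintro _ ⟨q, hq, rfl⟩; exact P1 q hq⟩,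
       ⟨a0 * b1 + a1 * b0, by rintro _ ⟨p, hp, rfl⟩; exact Pd p hp⟩,
       ⟨a0 * b2 + a2 * b0 + a1 * b1, by rintro _ ⟨p, hp, rfl⟩; exact P2 p hp⟩⟩, ?_, ?_⟩
  · rw [omega0_smul_eq]
    exact ((hsnd.smul hfΩ).add (hlΩ.smul hφfst)).add ((hsnd.sub hfst).smul hφ'fst)
  · -- the norm inequality
    have h1 : n0 K (fun q => lam q • φ q) ≤ a0 * b0 :=
      Real.sSup_le (by rintro _ ⟨q, hq, rfl⟩; exact P0 q hq) (mul_nonneg a0n b0n)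
    have h2 : n0 K (fun q => lam q • φ' q + lam' q • φ q) ≤ a0 * b1 + a1 * b0 :=
      Real.sSup_le (by rintro _ ⟨q, hq, rfl⟩; exact P1 q hq)
        (by positivity)
    have h3 : ndel K (fun q => lam q • φ q) ≤ a0 * b1 + a1 * b0 :=
      Real.sSup_le (by rintro _ ⟨p, hp, rfl⟩; exact Pd p hp) (by positivity)
    have h4 : n2 K (fun q => lam q • φ q) (fun q => lam q • φ' q + lam' q • φ q)
        ≤ a0 * b2 + a2 * b0 + a1 * b1 :=
      Real.sSup_le (by rintro _ ⟨p, hp, rfl⟩; exact P2 p hp) (by positivity)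
    have : c1Norm K lam lam' * c1Norm K φ φ' = (a0 + a1 + a2) * (b0 + b1 + b2) := rfl
    rw [this]
    unfold c1Norm
    have hm : max (n0 K (fun q => lam q • φ' q + lam' q • φ q))
        (ndel K (fun q => lam q • φ q)) ≤ a0 * b1 + a1 * b0 := max_le h2 h3
    nlinarith [mul_nonneg a1n b2n, mul_nonneg a2n b1n, mul_nonneg a2n b2n]
  · -- norm of the constant function 1
    have hKKne : (K ×ˢ K).Nonempty := hKne.prod hKne
    have e0 : n0 K (fun _ : ℂ => (1 : ℂ)) = 1 := by
      unfold n0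
      simp only [norm_one]
      rw [Set.Nonempty.image_const hKne, csSup_singleton]
    have e1 : n0 K (fun _ : ℂ => (0 : ℂ)) = 0 := by
      unfold n0
      simp only [norm_zero]
      rw [Set.Nonempty.image_const hKne, csSup_singleton]
    have e2 : ndel K (fun _ : ℂ => (1 : ℂ)) = 0 := by
      unfold ndel
      simp only [sub_self, norm_zero]
      rw [Set.Nonempty.image_const hKKne, csSup_singleton]
    have e3 : n2 K (fun _ : ℂ => (1 : ℂ)) (fun _ : ℂ => (0 : ℂ)) = 0 := by
      unfold n2
      have : ∀ p : ℂ × ℂ, omega0 (fun _ : ℂ => (1 : ℂ)) (fun _ : ℂ => (0 : ℂ)) p = 0 := by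
        intro p
        unfold omega0
        split_ifs <;> simp
      simp only [this, norm_zero]
      rw [Set.Nonempty.image_const hKKne, csSup_singleton]
    rw [c1Norm, e0, e1, e2, e3, max_self]
    norm_num
end
end

section
/- Let K be a perfect subset of ℂ and B a complex Banach algebra (not necessarily commutative). If φ, ψ ∈ C¹_hol(K,B), then the pointwise product φ·ψ belongs to C¹_hol(K,B), its derivative is φψ' + φ'ψ, and ‖φ·ψ‖_{K,B} ≤ ‖φ‖_{K,B} · ‖ψ‖_{K,B}; in particular C¹_hol(K,B) is a Banach algebra. -/
noncomputable section

variable {B : Type*} [NormedAddCommGroup B] [NormedSpace ℂ B]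

/-- Key algebraic identity for the error term of a product, valid everywhere. -/
lemma omega0_mul {A : Type*} [NormedRing A] [NormedAlgebra ℂ A] (φ φ' ψ ψ' : ℂ → A) :
    omega0 (fun q => φ q * ψ q) (fun q => φ q * ψ' q + φ' q * ψ q) =
      fun p => φ p.2 * omega0 ψ ψ' p + omega0 φ φ' p * ψ p.1 +
        (φ p.2 - φ p.1) * ψ' p.1 := by
  funext p
  simp only [omega0]
  by_cases h : p.1 = p.2
  · simp [h]
  · simp only [if_neg h, mul_sub, sub_mul, smul_sub, mul_smul_comm, smul_mul_assoc]
    abel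

lemma image_bound {α : Type*} {s : Set α} {f : α → ℝ} {c : ℝ} (hc : 0 ≤ c)
    (h : ∀ x ∈ s, f x ≤ c) : BddAbove (f '' s) ∧ sSup (f '' s) ≤ c := by
  constructor
  · exact ⟨c, by rintro y ⟨x, hx, rfl⟩; exact h x hx⟩
  · exact Real.sSup_le (by rintro y ⟨x, hx, rfl⟩; exact h x hx) hc

/-- If `B` is a complex Banach algebra and `φ, ψ ∈ C¹_hol(K,B)`
(with derivatives `φ'`, `ψ'`), then the pointwise product `φ·ψ` belongs to
`C¹_hol(K,B)` with derivative `φψ' + φ'ψ` and `‖φ·ψ‖ ≤ ‖φ‖·‖ψ‖`; in particular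
`C¹_hol(K,B)` is a Banach algebra. -/
theorem c1Hol_mul_norm_le {A : Type*} [NormedRing A] [NormedAlgebra ℂ A]
    (K : Set ℂ) (hK : Perfect K) (hKne : K.Nonempty)
    (φ φ' ψ ψ' : ℂ → A)
    (hφ : IsC1HolPair K φ φ') (hφb : C1Bdd K φ φ')
    (hψ : IsC1HolPair K ψ ψ') (hψb : C1Bdd K ψ ψ') :
    IsC1HolPair K (fun q => φ q * ψ q) (fun q => φ q * ψ' q + φ' q * ψ q) ∧
    C1Bdd K (fun q => φ q * ψ q) (fun q => φ q * ψ' q + φ' q * ψ q) ∧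
    c1Norm K (fun q => φ q * ψ q) (fun q => φ q * ψ' q + φ' q * ψ q) ≤
      c1Norm K φ φ' * c1Norm K ψ ψ' := by
  obtain ⟨q₀, hq₀⟩ := hKne
  have hq₀₀ : (q₀, q₀) ∈ K ×ˢ K := ⟨hq₀, hq₀⟩
  -- pointwise bounds by the sups
  have P0φ : ∀ q ∈ K, ‖φ q‖ ≤ n0 K φ := fun q hq => le_csSup hφb.1 ⟨q, hq, rfl⟩
  have P0ψ : ∀ q ∈ K, ‖ψ q‖ ≤ n0 K ψ := fun q hq => le_csSup hψb.1 ⟨q, hq, rfl⟩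
  have P0φ' : ∀ q ∈ K, ‖φ' q‖ ≤ n0 K φ' := fun q hq => le_csSup hφb.2.1 ⟨q, hq, rfl⟩
  have P0ψ' : ∀ q ∈ K, ‖ψ' q‖ ≤ n0 K ψ' := fun q hq => le_csSup hψb.2.1 ⟨q, hq, rfl⟩
  have Pdφ : ∀ p ∈ K ×ˢ K, ‖φ p.2 - φ p.1‖ ≤ ndel K φ :=
    fun p hp => le_csSup hφb.2.2.1 ⟨p, hp, rfl⟩
  have Pdψ : ∀ p ∈ K ×ˢ K, ‖ψ p.2 - ψ p.1‖ ≤ ndel K ψ :=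
    fun p hp => le_csSup hψb.2.2.1 ⟨p, hp, rfl⟩
  have P2φ : ∀ p ∈ K ×ˢ K, ‖omega0 φ φ' p‖ ≤ n2 K φ φ' :=
    fun p hp => le_csSup hφb.2.2.2 ⟨p, hp, rfl⟩
  have P2ψ : ∀ p ∈ K ×ˢ K, ‖omega0 ψ ψ' p‖ ≤ n2 K ψ ψ' :=
    fun p hp => le_csSup hψb.2.2.2 ⟨p, hp, rfl⟩
  -- nonnegativity
  have a0 : (0:ℝ) ≤ n0 K φ := le_trans (norm_nonneg _) (P0φ q₀ hq₀)
  have b0 : (0:ℝ) ≤ n0 K ψ := le_trans (norm_nonneg _) (P0ψ q₀ hq₀)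
  have a0' : (0:ℝ) ≤ n0 K φ' := le_trans (norm_nonneg _) (P0φ' q₀ hq₀)
  have b0' : (0:ℝ) ≤ n0 K ψ' := le_trans (norm_nonneg _) (P0ψ' q₀ hq₀)
  have ad : (0:ℝ) ≤ ndel K φ := le_trans (norm_nonneg _) (Pdφ _ hq₀₀)
  have bd : (0:ℝ) ≤ ndel K ψ := le_trans (norm_nonneg _) (Pdψ _ hq₀₀)
  have a2 : (0:ℝ) ≤ n2 K φ φ' := le_trans (norm_nonneg _) (P2φ _ hq₀₀)
  have b2 : (0:ℝ) ≤ n2 K ψ ψ' := le_trans (norm_nonneg _) (P2ψ _ hq₀₀)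
  set A0 := n0 K φ; set B0 := n0 K ψ
  set A1 := max (n0 K φ') (ndel K φ) with hA1
  set B1 := max (n0 K ψ') (ndel K ψ) with hB1
  set A2 := n2 K φ φ'; set B2 := n2 K ψ ψ'
  have a1 : (0:ℝ) ≤ A1 := le_trans a0' (le_max_left _ _)
  have b1 : (0:ℝ) ≤ B1 := le_trans b0' (le_max_left _ _)
  have key := omega0_mul (A := A) φ φ' ψ ψ'
  -- pointwise bounds for the product
  have PB0 : ∀ q ∈ K, ‖φ q * ψ q‖ ≤ A0 * B0 := fun q hq =>
    le_trans (norm_mul_le _ _) (mul_le_mul (P0φ q hq) (P0ψ q hq) (norm_nonneg _) a0)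
  have PB1 : ∀ q ∈ K, ‖φ q * ψ' q + φ' q * ψ q‖ ≤ A0 * B1 + A1 * B0 := by
    intro q hq
    calc ‖φ q * ψ' q + φ' q * ψ q‖ ≤ ‖φ q * ψ' q‖ + ‖φ' q * ψ q‖ := norm_add_le _ _
      _ ≤ ‖φ q‖ * ‖ψ' q‖ + ‖φ' q‖ * ‖ψ q‖ := add_le_add (norm_mul_le _ _) (norm_mul_le _ _)
      _ ≤ A0 * B1 + A1 * B0 := add_le_add
          (mul_le_mul (P0φ q hq) (le_trans (P0ψ' q hq) (le_max_left _ _)) (norm_nonneg _) a0)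
          (mul_le_mul (le_trans (P0φ' q hq) (le_max_left _ _)) (P0ψ q hq) (norm_nonneg _) a1)
  have PBd : ∀ p ∈ K ×ˢ K, ‖φ p.2 * ψ p.2 - φ p.1 * ψ p.1‖ ≤ A0 * B1 + A1 * B0 := by
    intro p hp
    have : φ p.2 * ψ p.2 - φ p.1 * ψ p.1 =
        φ p.2 * (ψ p.2 - ψ p.1) + (φ p.2 - φ p.1) * ψ p.1 := by noncomm_ring
    rw [this]
    calc ‖φ p.2 * (ψ p.2 - ψ p.1) + (φ p.2 - φ p.1) * ψ p.1‖
        ≤ ‖φ p.2‖ * ‖ψ p.2 - ψ p.1‖ + ‖φ p.2 - φ p.1‖ * ‖ψ p.1‖ :=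
          le_trans (norm_add_le _ _) (add_le_add (norm_mul_le _ _) (norm_mul_le _ _))
      _ ≤ A0 * B1 + A1 * B0 := add_le_add
          (mul_le_mul (P0φ p.2 hp.2) (le_trans (Pdψ p hp) (le_max_right _ _)) (norm_nonneg _) a0)
          (mul_le_mul (le_trans (Pdφ p hp) (le_max_right _ _)) (P0ψ p.1 hp.1) (norm_nonneg _) a1)
  have PB2 : ∀ p ∈ K ×ˢ K,
      ‖omega0 (fun q => φ q * ψ q) (fun q => φ q * ψ' q + φ' q * ψ q) p‖ ≤
        A0 * B2 + A2 * B0 + A1 * B1 := by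
    intro p hp
    rw [key]
    calc ‖φ p.2 * omega0 ψ ψ' p + omega0 φ φ' p * ψ p.1 + (φ p.2 - φ p.1) * ψ' p.1‖
        ≤ ‖φ p.2‖ * ‖omega0 ψ ψ' p‖ + ‖omega0 φ φ' p‖ * ‖ψ p.1‖ +
            ‖φ p.2 - φ p.1‖ * ‖ψ' p.1‖ := by
          refine le_trans (norm_add_le _ _) (add_le_add (le_trans (norm_add_le _ _)
            (add_le_add (norm_mul_le _ _) (norm_mul_le _ _))) (norm_mul_le _ _))
      _ ≤ A0 * B2 + A2 * B0 + A1 * B1 := by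
          refine add_le_add (add_le_add ?_ ?_) ?_
          · exact mul_le_mul (P0φ p.2 hp.2) (P2ψ p hp) (norm_nonneg _) a0
          · exact mul_le_mul (P2φ p hp) (P0ψ p.1 hp.1) (norm_nonneg _) a2
          · exact mul_le_mul (le_trans (Pdφ p hp) (le_max_right _ _))
              (le_trans (P0ψ' p.1 hp.1) (le_max_left _ _)) (norm_nonneg _) a1
  -- assemble bounds
  have h0 := image_bound (mul_nonneg a0 b0) PB0
  have h1 := image_bound (by positivity) PB1
  have hd := image_bound (by positivity) PBd
  have h2 := image_bound (by positivity) PB2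
  refine ⟨⟨hφ.1.mul hψ.1, (hφ.1.mul hψ.2.1).add (hφ.2.1.mul hψ.1), ?_⟩,
    ⟨h0.1, h1.1, hd.1, h2.1⟩, ?_⟩
  · rw [key]
    have hφ2 : ContinuousOn (fun p : ℂ × ℂ => φ p.2) (K ×ˢ K) :=
      hφ.1.comp continuous_snd.continuousOn (fun p hp => hp.2)
    have hφ1 : ContinuousOn (fun p : ℂ × ℂ => φ p.1) (K ×ˢ K) :=
      hφ.1.comp continuous_fst.continuousOn (fun p hp => hp.1)
    have hψ1 : ContinuousOn (fun p : ℂ × ℂ => ψ p.1) (K ×ˢ K) :=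
      hψ.1.comp continuous_fst.continuousOn (fun p hp => hp.1)
    have hψ'1 : ContinuousOn (fun p : ℂ × ℂ => ψ' p.1) (K ×ˢ K) :=
      hψ.2.1.comp continuous_fst.continuousOn (fun p hp => hp.1)
    exact ((hφ2.mul hψ.2.2).add (hφ.2.2.mul hψ1)).add ((hφ2.sub hφ1).mul hψ'1)
  · have hn0 : n0 K (fun q => φ q * ψ q) ≤ A0 * B0 := h0.2
    have hn1 : max (n0 K (fun q => φ q * ψ' q + φ' q * ψ q))
        (ndel K (fun q => φ q * ψ q)) ≤ A0 * B1 + A1 * B0 := max_le h1.2 hd.2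
    have hn2 : n2 K (fun q => φ q * ψ q) (fun q => φ q * ψ' q + φ' q * ψ q) ≤
        A0 * B2 + A2 * B0 + A1 * B1 := h2.2
    unfold c1Norm
    nlinarith [mul_nonneg a1 b2, mul_nonneg a2 b1, mul_nonneg a2 b2]
end
end

section
/- Let τ > 0 and M > 2ζ(1+τ). For every k ∈ ℤ∖{0}, the formula λ_k(q) = 1/(q^k − 1) (extended continuously to q = 0 and q = ∞) defines a function λ_k ∈ C¹_hol(K_M, ℂ) satisfying ‖λ_k‖_{K_M} ≤ 7 M² |k|^{3+2τ}. -/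
set_option maxHeartbeats 1600000


open OnePoint

noncomputable section

/-- Real Riemann zeta value `ζ(s) = Σ_{m≥1} m^{-s}` for real `s`. -/
def zetaR (s : ℝ) : ℝ := ∑' n : ℕ, 1 / (n + 1 : ℝ) ^ s

/-- The set `A_M^ℝ` of real `(2+τ)`-Diophantine numbers with constant `M`. -/
def AMR (τ M : ℝ) : Set ℝ :=
  {ω | ∀ n : ℤ, ∀ m : ℕ, 0 < m → 1 / (M * (m : ℝ) ^ (2 + τ)) ≤ |ω - n / m|}

/-- The complex extension `A_M^ℂ`. -/
def AMC (τ M : ℝ) : Set ℂ :=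
  {ω | ∃ ω₀ ∈ AMR τ M, |ω₀ - ω.re| ≤ |ω.im|}

/-- `E(ω) = e^{2πiω}`. -/
def Efn (ω : ℂ) : ℂ := Complex.exp (2 * Real.pi * Complex.I * ω)

/-- The compact set `K_M = E(A_M^ℂ) ∪ {0,∞}` in the Riemann sphere `Ĉ = ℂ ∪ {∞}`. -/
def KM (τ M : ℝ) : Set (OnePoint ℂ) :=
  (fun ω => ((Efn ω : ℂ) : OnePoint ℂ)) '' AMC τ M ∪ {((0 : ℂ) : OnePoint ℂ), ∞}

/-- The chart `ξ ↦ 1/ξ` of the Riemann sphere at `∞`. -/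
def sphChart (ξ : ℂ) : OnePoint ℂ := if ξ = 0 then ∞ else ((ξ⁻¹ : ℂ) : OnePoint ℂ)

/-- `K ∩ ℂ`, in the coordinate `q`. -/
def finPart (K : Set (OnePoint ℂ)) : Set ℂ := {q : ℂ | (q : OnePoint ℂ) ∈ K}
/-- `K̃ = {ξ : 1/ξ ∈ K}`, the set `K` read in the coordinate `ξ = 1/q`. -/
def infPart (K : Set (OnePoint ℂ)) : Set ℂ := {ξ : ℂ | sphChart ξ ∈ K}

variable {B : Type*} [NormedAddCommGroup B] [NormedSpace ℂ B]

/-- The function `λ_k(q) = 1/(q^k−1)`, extended continuously to `q = 0` and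
`q = ∞` (where it takes the values `-1` or `0` according to the sign of `k`). -/
def lamk (k : ℤ) (q : OnePoint ℂ) : ℂ :=
  Option.elim (show Option ℂ from q) (if 0 < k then 0 else -1)
    (fun z => if z = 0 then (if 0 < k then -1 else 0) else (z ^ k - 1)⁻¹)


/-! ### Auxiliary material for the proof -/

section AuxProof

open Real OnePoint

-- numeric helpers
lemma exp_numeric_aux : Real.exp (1.26:ℝ) ≤ 3.7 := by
  have h1 : Real.exp (1.26 : ℝ) = Real.exp 1 * Real.exp 0.26 := by
    rw [← Real.exp_add]; norm_num
  have h2 : Real.exp 1 < 2.7182818286 := Real.exp_one_lt_d9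
  have h3 : Real.exp (0.26:ℝ) ≤ 1/0.74 := by
    have h4 := Real.add_one_le_exp (-0.26 : ℝ)
    have h5 : Real.exp (-0.26:ℝ) = (Real.exp 0.26)⁻¹ := Real.exp_neg _
    have h6 : (0.74:ℝ) ≤ (Real.exp 0.26)⁻¹ := by rw [← h5]; linarith
    have h7 : (0:ℝ) < Real.exp 0.26 := Real.exp_pos _
    have h9 : (Real.exp 0.26)⁻¹ * Real.exp 0.26 = 1 := inv_mul_cancel₀ (ne_of_gt h7)
    have h8 : 0.74 * Real.exp 0.26 ≤ 1 := by nlinarith [mul_le_mul_of_nonneg_right h6 h7.le]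
    rw [le_div_iff₀ (by norm_num : (0:ℝ) < 0.74)]
    linarith
  nlinarith [Real.exp_pos (0.26:ℝ), Real.exp_pos 1]

lemma sin_half_sq_aux (x : ℝ) : Real.sin (x/2)^2 = (1 - Real.cos x)/2 := by
  have h1 := Real.cos_sq (x/2)
  have h2 := Real.sin_sq_add_cos_sq (x/2)
  rw [show 2*(x/2) = x by ring] at h1
  linarith

lemma neg_one_zpow_sq_aux (n : ℤ) : ((-1:ℝ)^n)^2 = 1 := by
  rcases Int.even_or_odd n with h | h
  · rw [h.neg_one_zpow]; norm_num
  · rw [Odd.neg_one_zpow h]; norm_num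

lemma exp_neg_le_inv_add_one_aux {s : ℝ} (hs : 0 ≤ s) : Real.exp (-s) ≤ 1/(1+s) := by
  have h3 := Real.add_one_le_exp s
  have hpos : (0:ℝ) < 1 + s := by linarith
  rw [Real.exp_neg, ← one_div]
  rw [div_le_div_iff₀ (Real.exp_pos _) hpos]
  nlinarith [Real.exp_pos s]

lemma core_ineq (j : ℕ) (hj : 1 ≤ j) (d x y ω₀ : ℝ) (hd0 : 0 < d) (hd : d ≤ 1/2)
    (hdio : ∀ n : ℤ, d ≤ |(j:ℝ)*ω₀ - n|) (hxy : |ω₀ - x| ≤ |y|) :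
    d^2 ≤ (Real.exp (-(2*π*j*y)) - 1)^2 + 4*Real.exp (-(2*π*j*y)) * Real.sin (π*(j*x))^2 := by
  have hπ3 : (3:ℝ) < π := Real.pi_gt_three
  have hπ315 : π < 3.15 := Real.pi_lt_d2
  have hjr : (1:ℝ) ≤ (j:ℝ) := by exact_mod_cast hj
  by_cases hcase : 0.4*d ≤ (j:ℝ)*|y|
  · -- large imaginary part
    have hkey : d ≤ |Real.exp (-(2*π*j*y)) - 1| := by
      rcases le_or_gt 0 y with hy | hy
      · have hay : |y| = y := abs_of_nonneg hy
        have ht : 0.8*π*d ≤ 2*π*j*y := by rw [hay] at hcase; nlinarith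
        have h1 : Real.exp (-(2*π*j*y)) ≤ Real.exp (-(0.8*π*d)) := by
          apply Real.exp_le_exp.2; linarith
        have h2 : Real.exp (-(0.8*π*d)) ≤ 1/(1+0.8*π*d) := exp_neg_le_inv_add_one_aux (by nlinarith)
        have h4 : 1/(1+0.8*π*d) ≤ 1 - d := by
          rw [div_le_iff₀ (by nlinarith)]
          have hh1 : 0 ≤ d * (0.4*π - 1) := mul_nonneg hd0.le (by linarith)
          have hh2 : 0.8*π*d*d ≤ 0.8*π*d*(1/2) := by
            apply mul_le_mul_of_nonneg_left hd (by positivity)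
          nlinarith
        rw [le_abs]
        right
        linarith
      · have hay : |y| = -y := abs_of_neg hy
        have ht : 0.8*π*d ≤ -(2*π*j*y) := by rw [hay] at hcase; nlinarith
        have h1 := Real.add_one_le_exp (-(2*π*j*y))
        rw [le_abs]
        left
        nlinarith
    have h5 : d^2 ≤ (Real.exp (-(2*π*j*y)) - 1)^2 := by
      rw [← sq_abs (Real.exp (-(2*π*j*y)) - 1)]
      exact pow_le_pow_left₀ hd0.le hkey 2
    nlinarith [Real.exp_pos (-(2*π*j*y)), sq_nonneg (Real.sin (π*(j*x)))]
  · -- small imaginary part: use the sine term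
    push_neg at hcase
    set t := 2*π*(j:ℝ)*y with htdef
    have habst : |t| ≤ 1.26 := by
      have : |t| = 2*π*((j:ℝ)*|y|) := by
        rw [abs_mul]
        rw [abs_of_nonneg (by positivity : (0:ℝ) ≤ 2*π*(j:ℝ))]
        ring
      rw [this]
      nlinarith [hcase.le, hd0, hd]
    -- exponential lower bound
    have hexp : (1:ℝ)/3.7 ≤ Real.exp (-t) := by
      have h1 : Real.exp (-(1.26:ℝ)) ≤ Real.exp (-t) := by
        apply Real.exp_le_exp.2
        have := abs_le.1 habst
        linarith [this.2]
      refine le_trans ?_ h1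
      rw [Real.exp_neg, ← one_div]
      exact one_div_le_one_div_of_le (Real.exp_pos _) exp_numeric_aux
    -- sine lower bound
    set n : ℤ := round ((j:ℝ)*x) with hndef
    set v : ℝ := (j:ℝ)*x - n with hvdef
    have hv2 : |v| ≤ 1/2 := abs_sub_round ((j:ℝ)*x)
    clear_value t n v
    have hvlb : 0.6*d ≤ |v| := by
      have h1 := hdio n
      have h2 : |(j:ℝ)*x - (j:ℝ)*ω₀| ≤ (j:ℝ)*|y| := by
        rw [← mul_sub, abs_mul, abs_of_nonneg (by linarith : (0:ℝ) ≤ (j:ℝ))]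
        have : |x - ω₀| ≤ |y| := by rw [abs_sub_comm]; exact hxy
        exact mul_le_mul_of_nonneg_left this (by linarith)
      have h3 : |(j:ℝ)*ω₀ - n| ≤ |(j:ℝ)*ω₀ - (j:ℝ)*x| + |(j:ℝ)*x - n| := abs_sub_le _ _ _
      rw [abs_sub_comm ((j:ℝ)*ω₀) ((j:ℝ)*x)] at h3
      have := hcase.le
      simp only [hvdef]
      linarith
    have hsq : Real.sin (π*((j:ℝ)*x))^2 = Real.sin (π*v)^2 := by
      have harg : π*((j:ℝ)*x) = π*v + n*π := by rw [hvdef]; push_cast; ring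
      rw [harg, Real.sin_add_int_mul_pi, mul_pow, neg_one_zpow_sq_aux, one_mul]
    have hsabs : Real.sin (π*v)^2 = Real.sin (π*|v|)^2 := by
      rcases abs_cases v with ⟨h, _⟩ | ⟨h, _⟩
      · rw [h]
      · rw [h, mul_neg, Real.sin_neg, neg_sq]
    have hsin : 2*|v| ≤ Real.sin (π*|v|) := by
      have h1 : (0:ℝ) ≤ π*|v| := by positivity
      have h2 : π*|v| ≤ π/2 := by nlinarith [abs_nonneg v]
      have h3 := Real.mul_le_sin h1 h2
      have h4 : 2/π*(π*|v|) = 2*|v| := by field_simp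
      rw [h4] at h3
      exact h3
    have hsinsq : (1.2*d)^2 ≤ Real.sin (π*((j:ℝ)*x))^2 := by
      rw [hsq]
      rw [hsabs]
      have h0 : (0:ℝ) ≤ 1.2*d := by linarith
      have h1 : 1.2*d ≤ 2*|v| := by linarith
      have h2 : 1.2*d ≤ Real.sin (π*|v|) := le_trans h1 hsin
      exact pow_le_pow_left₀ h0 h2 2
    have ha0 : (0:ℝ) ≤ Real.exp (-t) := (Real.exp_pos _).le
    have hb0 : (0:ℝ) ≤ (1.2*d)^2 := by positivity
    have hprod : (1/3.7)*((1.2*d)^2) ≤ Real.exp (-t) * Real.sin (π*((j:ℝ)*x))^2 :=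
      mul_le_mul hexp hsinsq hb0 ha0
    nlinarith [sq_nonneg (Real.exp (-t) - 1), hprod, sq_nonneg d]

lemma one_le_zetaR {s : ℝ} (hs : 1 < s) : 1 ≤ zetaR s := by
  have hsum : Summable (fun n : ℕ => 1 / ((n:ℝ) + 1) ^ s) := by
    have h1 : Summable (fun n : ℕ => 1 / ((n:ℝ)) ^ s) := (Real.summable_one_div_nat_rpow).2 hs
    have h2 := (summable_nat_add_iff 1).2 h1
    refine h2.congr fun n => ?_
    push_cast
    ring_nf
  have h0 := Summable.le_tsum hsum 0 (fun j _ => by positivity)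
  simp only [Nat.cast_zero, zero_add, Real.one_rpow] at h0
  calc (1:ℝ) = 1/(0+1:ℝ)^s := by norm_num
    _ ≤ zetaR s := by
        rw [zetaR]
        exact le_trans (by norm_num) h0

lemma AMR_neg {τ M : ℝ} {ω₀ : ℝ} (h : ω₀ ∈ AMR τ M) : -ω₀ ∈ AMR τ M := by
  intro n m hm
  have h2 := h (-n) m hm
  have : |-ω₀ - (n:ℝ)/m| = |ω₀ - ((-n : ℤ):ℝ)/m| := by
    push_cast
    rw [← abs_neg]
    ring_nf
  rw [this]
  exact h2

lemma AMC_neg {τ M : ℝ} {ω : ℂ} (h : ω ∈ AMC τ M) : -ω ∈ AMC τ M := by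
  obtain ⟨ω₀, h1, h2⟩ := h
  refine ⟨-ω₀, AMR_neg h1, ?_⟩
  simp only [Complex.neg_re, Complex.neg_im, abs_neg]
  rw [show -ω₀ - -ω.re = -(ω₀ - ω.re) by ring, abs_neg]
  exact h2

lemma Efn_neg (ω : ℂ) : Efn (-ω) = (Efn ω)⁻¹ := by
  rw [Efn, Efn, ← Complex.exp_neg]
  ring_nf

lemma Efn_ne_zero (ω : ℂ) : Efn ω ≠ 0 := Complex.exp_ne_zero _

lemma finPart_KM (τ M : ℝ) : finPart (KM τ M) = (Efn '' AMC τ M) ∪ {0} := by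
  ext q
  simp only [finPart, KM, Set.mem_setOf_eq, Set.mem_union, Set.mem_image,
    Set.mem_insert_iff, Set.mem_singleton_iff, OnePoint.coe_eq_coe]
  constructor
  · rintro (⟨ω, hω, hq⟩ | h | h)
    · exact Or.inl ⟨ω, hω, hq⟩
    · exact Or.inr h
    · exact absurd h (OnePoint.coe_ne_infty q)
  · rintro (⟨ω, hω, hq⟩ | h)
    · exact Or.inl ⟨ω, hω, hq⟩
    · exact Or.inr (Or.inl h)

lemma mem_Efn_inv_iff (τ M : ℝ) (ξ : ℂ) (hξ : ξ ≠ 0) :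
    ξ⁻¹ ∈ Efn '' AMC τ M ↔ ξ ∈ Efn '' AMC τ M := by
  constructor
  · rintro ⟨ω, hω, h⟩
    refine ⟨-ω, AMC_neg hω, ?_⟩
    rw [Efn_neg, h, inv_inv]
  · rintro ⟨ω, hω, h⟩
    exact ⟨-ω, AMC_neg hω, by rw [Efn_neg, h]⟩

lemma infPart_KM (τ M : ℝ) : infPart (KM τ M) = finPart (KM τ M) := by
  rw [finPart_KM]
  ext ξ
  by_cases hξ : ξ = 0
  · subst hξ
    simp only [infPart, Set.mem_setOf_eq, sphChart, if_pos rfl, KM]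
    constructor
    · intro _; exact Or.inr rfl
    · intro _
      exact Or.inr (Or.inr rfl)
  · simp only [infPart, Set.mem_setOf_eq, sphChart, if_neg hξ, KM, Set.mem_union,
      Set.mem_image, Set.mem_insert_iff, Set.mem_singleton_iff, OnePoint.coe_eq_coe,
      Set.mem_singleton_iff]
    have hinv : ξ⁻¹ ≠ 0 := inv_ne_zero hξ
    constructor
    · rintro (⟨ω, hω, h⟩ | h | h)
      · exact Or.inl ((mem_Efn_inv_iff τ M ξ hξ).1 ⟨ω, hω, h⟩)
      · exact absurd h hinv
      · exact absurd h (OnePoint.coe_ne_infty _)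
    · rintro (h | h)
      · obtain ⟨ω, hω, h2⟩ := (mem_Efn_inv_iff τ M ξ hξ).2 h
        exact Or.inl ⟨ω, hω, h2⟩
      · exact absurd h hξ

lemma Efn_lower (τ M : ℝ) (hτ : 0 < τ) (hM2 : 2 ≤ M) (j : ℕ) (hj : 1 ≤ j)
    (ω : ℂ) (hω : ω ∈ AMC τ M) :
    1/(M*(j:ℝ)^(1+τ:ℝ)) ≤ ‖Efn ω ^ j - 1‖ := by
  obtain ⟨ω₀, hω₀, hxy⟩ := hω
  have hj0 : (0:ℝ) < (j:ℝ) := by exact_mod_cast hj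
  have hjr1 : (1:ℝ) ≤ (j:ℝ)^(1+τ:ℝ) := Real.one_le_rpow (by exact_mod_cast hj) (by linarith)
  have hMj : 2 ≤ M*(j:ℝ)^(1+τ:ℝ) := by nlinarith
  set d : ℝ := 1/(M*(j:ℝ)^(1+τ:ℝ)) with hddef
  have hd0 : 0 < d := by rw [hddef]; positivity
  have hd : d ≤ 1/2 := by
    rw [hddef]
    rw [div_le_div_iff₀ (by linarith) (by norm_num)]
    linarith
  -- Diophantine condition
  have hdio : ∀ n : ℤ, d ≤ |(j:ℝ)*ω₀ - n| := by
    intro n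
    have h := hω₀ n j (by omega)
    have hpow : (j:ℝ)^((2:ℝ)+τ) = (j:ℝ) * (j:ℝ)^(1+τ:ℝ) := by
      rw [show (2:ℝ)+τ = 1+(1+τ) by ring, Real.rpow_add hj0, Real.rpow_one]
    have habs : |(j:ℝ)*ω₀ - n| = (j:ℝ) * |ω₀ - n/(j:ℝ)| := by
      rw [← abs_of_pos hj0, ← abs_mul]
      congr 1
      field_simp
      rw [abs_of_pos hj0]
      ring
    rw [habs]
    calc d = (j:ℝ) * (1/(M*(j:ℝ)^((2:ℝ)+τ))) := by
          rw [hpow, hddef]; field_simp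
      _ ≤ (j:ℝ) * |ω₀ - n/(j:ℝ)| := mul_le_mul_of_nonneg_left h hj0.le
  -- complex computation
  have hq : Efn ω ^ j = Complex.exp ((j:ℂ) * (2*(π:ℂ)*Complex.I*ω)) := by
    rw [Efn, ← Complex.exp_nat_mul]
  set w : ℂ := (j:ℂ) * (2*(π:ℂ)*Complex.I*ω) with hwdef
  have hwre : w.re = -(2*π*(j:ℝ)*ω.im) := by
    simp [hwdef, Complex.mul_re, Complex.mul_im]
    ring
  have hwim : w.im = 2*π*(j:ℝ)*ω.re := by
    simp [hwdef, Complex.mul_re, Complex.mul_im]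
    ring
  have hns : ‖Complex.exp w - 1‖^2
      = (Real.exp w.re - 1)^2 + 4*Real.exp w.re * Real.sin (w.im/2)^2 := by
    rw [Complex.sq_norm, Complex.normSq_apply]
    simp only [Complex.sub_re, Complex.sub_im, Complex.exp_re, Complex.exp_im,
      Complex.one_re, Complex.one_im]
    rw [sin_half_sq_aux w.im]
    have hpy := Real.sin_sq_add_cos_sq w.im
    nlinarith [hpy, Real.exp_pos w.re]
  have hcore := core_ineq j hj d ω.re ω.im ω₀ hd0 hd hdio hxy
  rw [hq]
  have h1 : d^2 ≤ ‖Complex.exp w - 1‖^2 := by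
    rw [hns, hwre, hwim]
    rw [show (2*π*(j:ℝ)*ω.re)/2 = π*((j:ℝ)*ω.re) by ring]
    exact hcore
  nlinarith [norm_nonneg (Complex.exp w - 1), hd0]

/-- model function -/
def eAux (j : ℕ) : ℂ → ℂ := fun z => (z^j - 1)⁻¹
def gAux (j : ℕ) : ℂ → ℂ := fun z => -((j:ℂ) * z^(j-1)) * (((z^j-1))^2)⁻¹
def SAux (j : ℕ) : ℂ × ℂ → ℂ := fun p => ∑ i ∈ Finset.range j, p.2^i * p.1^(j-1-i)
def HAux (j : ℕ) : ℂ × ℂ → ℂ :=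
  fun p => -(SAux j p) * ((p.1^j-1)*(p.2^j-1))⁻¹ + (j:ℂ)*p.1^(j-1) * (((p.1^j-1))^2)⁻¹

lemma SAux_diag (j : ℕ) (q : ℂ) : SAux j (q, q) = (j:ℂ) * q^(j-1) := by
  rw [SAux]
  simp only
  rw [Finset.sum_congr rfl (fun i hi => ?_), Finset.sum_const, Finset.card_range, nsmul_eq_mul]
  rw [← pow_add]
  congr 1
  have := Finset.mem_range.1 hi
  omega

lemma hpow_norm (j : ℕ) (hj : 1 ≤ j) (q : ℂ) : ‖q‖^(j-1) ≤ 1 + ‖q^j - 1‖ := by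
  rcases le_or_gt ‖q‖ 1 with h | h
  · have h1 : ‖q‖^(j-1) ≤ 1 := pow_le_one₀ (norm_nonneg q) h
    have h2 := norm_nonneg (q^j - 1)
    linarith
  · have h1 : ‖q‖^(j-1) ≤ ‖q‖^j := pow_le_pow_right₀ h.le (Nat.sub_le j 1)
    have h2 : ‖q‖^j = ‖q^j‖ := (norm_pow q j).symm
    have h3 : ‖q^j‖ ≤ 1 + ‖q^j - 1‖ := by
      calc ‖q^j‖ = ‖1 + (q^j - 1)‖ := by ring_nf
        _ ≤ ‖(1:ℂ)‖ + ‖q^j - 1‖ := norm_add_le _ _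
        _ = 1 + ‖q^j - 1‖ := by rw [norm_one]
    linarith

lemma frac_bound {d a b N : ℝ} (hd0 : 0 < d) (hd1 : d ≤ 1) (ha : d ≤ a) (hb : d ≤ b)
    (hN : 0 ≤ N) : N*(1+a)/(a*b) ≤ 2*N/d^2 := by
  have ha0 : 0 < a := lt_of_lt_of_le hd0 ha
  have hb0 : 0 < b := lt_of_lt_of_le hd0 hb
  rw [div_le_div_iff₀ (by positivity) (by positivity)]
  have h1 : d*d ≤ a*b := mul_le_mul ha hb hd0.le ha0.le
  have h2 : d^2 ≤ b := by nlinarith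
  have h3 : a*d^2 ≤ a*b := mul_le_mul_of_nonneg_left h2 ha0.le
  nlinarith [mul_le_mul_of_nonneg_left h3 hN, mul_le_mul_of_nonneg_left h1 hN]

lemma gAux_bound (j : ℕ) (hj : 1 ≤ j) {d : ℝ} (hd0 : 0 < d) (hd1 : d ≤ 1) (q : ℂ)
    (hq : d ≤ ‖q^j - 1‖) : ‖gAux j q‖ ≤ 2*(j:ℝ)/d^2 := by
  have hA0 : (0:ℝ) < ‖q^j - 1‖ := lt_of_lt_of_le hd0 hq
  have h1 : ‖gAux j q‖ = ((j:ℝ) * ‖q‖^(j-1)) / (‖q^j-1‖*‖q^j-1‖) := by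
    simp only [gAux]
    rw [norm_mul, norm_neg, norm_mul, norm_inv, norm_pow, norm_pow, Complex.norm_natCast,
      div_eq_mul_inv, sq]
  rw [h1]
  calc ((j:ℝ) * ‖q‖^(j-1)) / (‖q^j-1‖*‖q^j-1‖)
      ≤ ((j:ℝ) * (1+‖q^j-1‖)) / (‖q^j-1‖*‖q^j-1‖) := by
        have h2 := hpow_norm j hj q
        gcongr
    _ = (j:ℝ)*(1+‖q^j-1‖)/(‖q^j-1‖*‖q^j-1‖) := by ring
    _ ≤ 2*(j:ℝ)/d^2 := frac_bound hd0 hd1 hq hq (by positivity)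

lemma SAux_bound (j : ℕ) (hj : 1 ≤ j) (p : ℂ × ℂ) :
    ‖SAux j p‖ ≤ (j:ℝ) * (max ‖p.1‖ ‖p.2‖)^(j-1) := by
  set m := max ‖p.1‖ ‖p.2‖ with hm
  have hm0 : 0 ≤ m := le_trans (norm_nonneg _) (le_max_left _ _)
  calc ‖SAux j p‖ ≤ ∑ i ∈ Finset.range j, ‖p.2^i * p.1^(j-1-i)‖ := norm_sum_le _ _
    _ ≤ ∑ i ∈ Finset.range j, m^(j-1) := by
        apply Finset.sum_le_sum
        intro i hi
        rw [norm_mul, norm_pow, norm_pow]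
        calc ‖p.2‖^i * ‖p.1‖^(j-1-i) ≤ m^i * m^(j-1-i) := by
              apply mul_le_mul (pow_le_pow_left₀ (norm_nonneg _) (le_max_right _ _) i)
                (pow_le_pow_left₀ (norm_nonneg _) (le_max_left _ _) _) (by positivity)
                (by positivity)
          _ = m^(j-1) := by
              rw [← pow_add]
              congr 1
              have := Finset.mem_range.1 hi
              omega
    _ = (j:ℝ) * m^(j-1) := by rw [Finset.sum_const, Finset.card_range, nsmul_eq_mul]

lemma slope_eq (j : ℕ) (q q' : ℂ) (hA : q^j - 1 ≠ 0) (hB : q'^j - 1 ≠ 0) (hqq : q ≠ q') :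
    (q' - q)⁻¹ * (eAux j q' - eAux j q)
      = -(SAux j (q, q')) * ((q^j-1)*(q'^j-1))⁻¹ := by
  have hne : q' - q ≠ 0 := sub_ne_zero_of_ne (Ne.symm hqq)
  have hgeom : (∑ i ∈ Finset.range j, q'^i * q^(j-1-i)) * (q' - q) = q'^j - q^j :=
    geom_sum₂_mul q' q j
  have h1 : eAux j q' - eAux j q
      = ((q^j - 1) - (q'^j - 1)) * ((q^j-1)*(q'^j-1))⁻¹ := by
    simp only [eAux]
    field_simp
  have h2 : (q^j - 1) - (q'^j - 1) = -(q'^j - q^j) := by ring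
  rw [h1, h2, ← hgeom]
  simp only [SAux]
  field_simp

lemma omega0_eq_HAux (j : ℕ) (hj : 1 ≤ j) (p : ℂ × ℂ)
    (hA : p.1^j - 1 ≠ 0) (hB : p.2^j - 1 ≠ 0) :
    omega0 (eAux j) (gAux j) p = HAux j p := by
  obtain ⟨q, q'⟩ := p
  simp only at hA hB
  by_cases hqq : q = q'
  · subst hqq
    rw [omega0, if_pos rfl, HAux]
    simp only [SAux_diag]
    rw [sq]
    field_simp
    ring
  · rw [omega0, if_neg hqq, smul_eq_mul, slope_eq j q q' hA hB hqq, HAux, gAux]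
    simp only
    ring

lemma omega0_scale (f g : ℂ → ℂ) (c ε : ℂ) (f' : ℂ → ℂ) (s : Set ℂ)
    (hf : ∀ z ∈ s, f' z = c + ε * f z) (p : ℂ × ℂ) (hp : p ∈ s ×ˢ s) :
    omega0 f' (fun z => ε * g z) p = ε * omega0 f g p := by
  obtain ⟨q, q'⟩ := p
  have h1 : q ∈ s := hp.1
  have h2 : q' ∈ s := hp.2
  by_cases h : q = q'
  · subst h
    rw [omega0, omega0, if_pos rfl, if_pos rfl, mul_zero]
  · rw [omega0, omega0, if_neg h, if_neg h]
    simp only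
    rw [hf q h1, hf q' h2, smul_eq_mul, smul_eq_mul]
    ring

lemma contOn_eAux (j : ℕ) (s : Set ℂ) (hs : ∀ q ∈ s, q^j - 1 ≠ 0) :
    ContinuousOn (eAux j) s := by
  apply ContinuousOn.inv₀ (Continuous.continuousOn (by continuity)) hs

lemma contOn_gAux (j : ℕ) (s : Set ℂ) (hs : ∀ q ∈ s, q^j - 1 ≠ 0) :
    ContinuousOn (gAux j) s := by
  apply ContinuousOn.mul (Continuous.continuousOn (by continuity))
  apply ContinuousOn.inv₀ (Continuous.continuousOn (by continuity))
  intro q hq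
  exact pow_ne_zero 2 (hs q hq)

lemma contOn_HAux (j : ℕ) (s : Set ℂ) (hs : ∀ q ∈ s, q^j - 1 ≠ 0) :
    ContinuousOn (HAux j) (s ×ˢ s) := by
  have hS : Continuous (SAux j) := by
    apply continuous_finset_sum
    intro i _
    exact (continuous_snd.pow i).mul (continuous_fst.pow (j-1-i))
  apply ContinuousOn.add
  · apply ContinuousOn.mul (hS.neg.continuousOn)
    apply ContinuousOn.inv₀ (Continuous.continuousOn (by continuity))
    intro p hp
    exact mul_ne_zero (hs p.1 hp.1) (hs p.2 hp.2)
  · apply ContinuousOn.mul (Continuous.continuousOn (by continuity))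
    apply ContinuousOn.inv₀ (Continuous.continuousOn (by continuity))
    intro p hp
    exact pow_ne_zero 2 (hs p.1 hp.1)


lemma KM_pow_ne (τ M : ℝ) (hτ : 0 < τ) (hM : 2 * zetaR (1+τ) < M) (j : ℕ) (hj : 1 ≤ j) :
    ∀ q ∈ finPart (KM τ M), q^j - 1 ≠ 0 := by
  have hM2 : 2 ≤ M := by
    have h1 := one_le_zetaR (by linarith : (1:ℝ) < 1+τ)
    linarith
  rw [finPart_KM]
  rintro q (⟨ω, hω, rfl⟩ | rfl)
  · intro h
    have h2 := Efn_lower τ M hτ hM2 j hj ω hω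
    rw [h, norm_zero] at h2
    have hjr1 : (1:ℝ) ≤ (j:ℝ)^(1+τ:ℝ) :=
      Real.one_le_rpow (by exact_mod_cast hj) (by linarith)
    have : (0:ℝ) < 1/(M*(j:ℝ)^(1+τ:ℝ)) := by positivity
    linarith
  · rw [zero_pow (by omega : j ≠ 0), zero_sub]
    intro h
    simpa using h

lemma lamk_coe (k : ℤ) (z : ℂ) : lamk k (z : OnePoint ℂ)
    = if z = 0 then (if 0 < k then -1 else 0) else (z ^ k - 1)⁻¹ := rfl

lemma lamk_pos_eq (j : ℕ) (hj : 1 ≤ j) (z : ℂ) :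
    lamk (j:ℤ) (z : OnePoint ℂ) = 0 + 1 * eAux j z := by
  rw [lamk_coe, eAux]
  simp only [zero_add, one_mul]
  by_cases hz : z = 0
  · subst hz
    rw [if_pos rfl, if_pos (by exact_mod_cast hj : (0:ℤ) < (j:ℤ))]
    rw [zero_pow (by omega : j ≠ 0), zero_sub]
    norm_num
  · rw [if_neg hz, zpow_natCast]

lemma lamk_neg_eq (j : ℕ) (hj : 1 ≤ j) (z : ℂ) (hz1 : z^j - 1 ≠ 0) :
    lamk (-(j:ℤ)) (z : OnePoint ℂ) = -1 + (-1) * eAux j z := by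
  rw [lamk_coe]
  simp only [eAux]
  by_cases hz : z = 0
  · subst hz
    rw [if_pos rfl, if_neg (by omega : ¬ (0:ℤ) < -(j:ℤ))]
    rw [zero_pow (by omega : j ≠ 0), zero_sub]
    norm_num
  · rw [if_neg hz, zpow_neg, zpow_natCast]
    have hzj : z^j ≠ 0 := pow_ne_zero _ hz
    have hz2 : 1 - z^j ≠ 0 := by
      intro h
      apply hz1
      rw [show z^j - 1 = -(1 - z^j) from by ring, h, neg_zero]
    field_simp
    ring

lemma lamk_sph (k : ℤ) (hk : k ≠ 0) (ξ : ℂ) :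
    lamk k (sphChart ξ) = lamk (-k) (ξ : OnePoint ℂ) := by
  by_cases hξ : ξ = 0
  · subst hξ
    rw [sphChart, if_pos rfl, lamk_coe, if_pos rfl]
    have h1 : lamk k ∞ = if 0 < k then 0 else -1 := rfl
    rw [h1]
    rcases hk.lt_or_gt with h | h
    · rw [if_neg (by omega), if_pos (by omega)]
    · rw [if_pos h, if_neg (by omega)]
  · rw [sphChart, if_neg hξ, lamk_coe, lamk_coe, if_neg (inv_ne_zero hξ), if_neg hξ,
      inv_zpow, ← zpow_neg]

lemma main_aux (τ M : ℝ) (hτ : 0 < τ) (hM : 2 * zetaR (1 + τ) < M) (j : ℕ) (hj : 1 ≤ j)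
    (c ε : ℂ) (hc : ‖c‖ ≤ 1) (hε : ‖ε‖ = 1)
    (f : ℂ → ℂ) (hf : ∀ z ∈ finPart (KM τ M), f z = c + ε * eAux j z) :
    IsC1HolPair (finPart (KM τ M)) f (fun z => ε * gAux j z) ∧
    C1Bdd (finPart (KM τ M)) f (fun z => ε * gAux j z) ∧
    c1Norm (finPart (KM τ M)) f (fun z => ε * gAux j z) ≤ 7 * M^2 * (j:ℝ)^(3+2*τ:ℝ) := by
  have hM2 : 2 ≤ M := by
    have h1 := one_le_zetaR (by linarith : (1:ℝ) < 1+τ)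
    linarith
  set K := finPart (KM τ M) with hKdef
  have hj0 : (0:ℝ) < (j:ℝ) := by exact_mod_cast hj
  have hjr1 : (1:ℝ) ≤ (j:ℝ)^(1+τ:ℝ) := Real.one_le_rpow (by exact_mod_cast hj) (by linarith)
  have hMj : 2 ≤ M*(j:ℝ)^(1+τ:ℝ) := by nlinarith
  set d : ℝ := 1/(M*(j:ℝ)^(1+τ:ℝ)) with hddef
  have hd0 : 0 < d := by rw [hddef]; positivity
  have hd : d ≤ 1/2 := by
    rw [hddef, div_le_div_iff₀ (by linarith) (by norm_num)]
    linarith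
  have hd1 : d ≤ 1 := by linarith
  have hlow : ∀ q ∈ K, d ≤ ‖q^j - 1‖ := by
    rw [hKdef, finPart_KM]
    rintro q (⟨ω, hω, rfl⟩ | rfl)
    · exact Efn_lower τ M hτ hM2 j hj ω hω
    · rw [zero_pow (by omega : j ≠ 0), zero_sub, norm_neg, norm_one]
      linarith
  have hKne : ∀ q ∈ K, q^j - 1 ≠ 0 := by
    intro q hq h
    have h2 := hlow q hq
    rw [h, norm_zero] at h2
    linarith
  -- pointwise bounds
  have hbe : ∀ q ∈ K, ‖eAux j q‖ ≤ 1/d := by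
    intro q hq
    have he : ‖eAux j q‖ = ‖q^j - 1‖⁻¹ := by
      rw [show eAux j q = (q^j-1)⁻¹ from rfl, norm_inv]
    rw [he, ← one_div]
    exact one_div_le_one_div_of_le hd0 (hlow q hq)
  have hbf : ∀ q ∈ K, ‖f q‖ ≤ 1 + 1/d := by
    intro q hq
    rw [hf q hq]
    calc ‖c + ε * eAux j q‖ ≤ ‖c‖ + ‖ε‖ * ‖eAux j q‖ := by
          refine le_trans (norm_add_le _ _) ?_
          rw [norm_mul]
      _ ≤ 1 + 1 * (1/d) := by
          have h1 := hbe q hq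
          rw [hε]
          have h2 := norm_nonneg (eAux j q)
          nlinarith
      _ = 1 + 1/d := by ring
  have hbg : ∀ q ∈ K, ‖ε * gAux j q‖ ≤ 2*(j:ℝ)/d^2 := by
    intro q hq
    rw [norm_mul, hε, one_mul]
    exact gAux_bound j hj hd0 hd1 q (hlow q hq)
  have hbdel : ∀ p ∈ K ×ˢ K, ‖f p.2 - f p.1‖ ≤ 2/d := by
    intro p hp
    rw [hf _ hp.2, hf _ hp.1,
      show (c + ε*eAux j p.2) - (c + ε*eAux j p.1) = ε*(eAux j p.2 - eAux j p.1) from by ring,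
      norm_mul, hε, one_mul]
    have h1 := hbe _ hp.1
    have h2 := hbe _ hp.2
    calc ‖eAux j p.2 - eAux j p.1‖ ≤ ‖eAux j p.2‖ + ‖eAux j p.1‖ := norm_sub_le _ _
      _ ≤ 1/d + 1/d := add_le_add h2 h1
      _ = 2/d := by ring
  have hbom0 : ∀ p ∈ K ×ˢ K, ‖omega0 (eAux j) (gAux j) p‖ ≤ 4*(j:ℝ)/d^2 := by
    rintro ⟨q, q'⟩ hp
    have hq : q ∈ K := hp.1
    have hq' : q' ∈ K := hp.2
    have hA := hlow q hq
    have hB := hlow q' hq'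
    have hA0 : (0:ℝ) < ‖q^j-1‖ := lt_of_lt_of_le hd0 hA
    have hB0 : (0:ℝ) < ‖q'^j-1‖ := lt_of_lt_of_le hd0 hB
    by_cases hqq : q = q'
    · subst hqq
      rw [omega0, if_pos rfl, norm_zero]
      positivity
    · have hgb := gAux_bound j hj hd0 hd1 q hA
      have hslope : ‖(q' - q)⁻¹ * (eAux j q' - eAux j q)‖ ≤ 2*(j:ℝ)/d^2 := by
        rw [slope_eq j q q' (hKne q hq) (hKne q' hq') hqq, norm_mul, norm_neg, norm_inv,
          norm_mul]
        have hSb := SAux_bound j hj (q, q')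
        simp only at hSb
        rcases max_choice ‖q‖ ‖q'‖ with hmc | hmc
        · rw [hmc] at hSb
          have h5 := hpow_norm j hj q
          have h4 : ‖SAux j (q,q')‖ ≤ (j:ℝ)*(1+‖q^j-1‖) := by nlinarith
          calc ‖SAux j (q,q')‖ * (‖q^j-1‖*‖q'^j-1‖)⁻¹
              ≤ ((j:ℝ)*(1+‖q^j-1‖)) * (‖q^j-1‖*‖q'^j-1‖)⁻¹ :=
                mul_le_mul_of_nonneg_right h4 (by positivity)
            _ = (j:ℝ)*(1+‖q^j-1‖)/(‖q^j-1‖*‖q'^j-1‖) := (div_eq_mul_inv _ _).symm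
            _ ≤ 2*(j:ℝ)/d^2 := frac_bound hd0 hd1 hA hB (by positivity)
        · rw [hmc] at hSb
          have h5 := hpow_norm j hj q'
          have h4 : ‖SAux j (q,q')‖ ≤ (j:ℝ)*(1+‖q'^j-1‖) := by nlinarith
          calc ‖SAux j (q,q')‖ * (‖q^j-1‖*‖q'^j-1‖)⁻¹
              ≤ ((j:ℝ)*(1+‖q'^j-1‖)) * (‖q^j-1‖*‖q'^j-1‖)⁻¹ :=
                mul_le_mul_of_nonneg_right h4 (by positivity)
            _ = (j:ℝ)*(1+‖q'^j-1‖)/(‖q'^j-1‖*‖q^j-1‖) := by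
                rw [div_eq_mul_inv, mul_comm ‖q'^j-1‖ ‖q^j-1‖]
            _ ≤ 2*(j:ℝ)/d^2 := frac_bound hd0 hd1 hB hA (by positivity)
      rw [omega0, if_neg hqq]
      simp only [smul_eq_mul]
      calc ‖(q' - q)⁻¹ * (eAux j q' - eAux j q) - gAux j q‖
          ≤ ‖(q' - q)⁻¹ * (eAux j q' - eAux j q)‖ + ‖gAux j q‖ := norm_sub_le _ _
        _ ≤ 2*(j:ℝ)/d^2 + 2*(j:ℝ)/d^2 := by
            have := gAux_bound j hj hd0 hd1 q hA
            exact add_le_add hslope this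
        _ = 4*(j:ℝ)/d^2 := by ring
  have hOeq : ∀ p ∈ K ×ˢ K,
      ‖omega0 f (fun z => ε * gAux j z) p‖ = ‖omega0 (eAux j) (gAux j) p‖ := by
    intro p hp
    rw [omega0_scale (eAux j) (gAux j) c ε f K hf p hp, norm_mul, hε, one_mul]
  have hbom : ∀ p ∈ K ×ˢ K, ‖omega0 f (fun z => ε * gAux j z) p‖ ≤ 4*(j:ℝ)/d^2 := by
    intro p hp
    rw [hOeq p hp]
    exact hbom0 p hp
  -- the three parts
  refine ⟨⟨?_, ?_, ?_⟩, ⟨?_, ?_, ?_, ?_⟩, ?_⟩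
  · exact ContinuousOn.congr
      (continuousOn_const.add (continuousOn_const.mul (contOn_eAux j K hKne)))
      (fun z hz => hf z hz)
  · exact continuousOn_const.mul (contOn_gAux j K hKne)
  · refine ContinuousOn.congr (f := fun p : ℂ × ℂ => ε * HAux j p)
      (continuousOn_const.mul (contOn_HAux j K hKne)) ?_
    intro p hp
    rw [omega0_scale (eAux j) (gAux j) c ε f K hf p hp,
      omega0_eq_HAux j hj p (hKne p.1 hp.1) (hKne p.2 hp.2)]
  · exact ⟨1 + 1/d, by rintro x ⟨q, hq, rfl⟩; exact hbf q hq⟩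
  · exact ⟨2*(j:ℝ)/d^2, by rintro x ⟨q, hq, rfl⟩; exact hbg q hq⟩
  · exact ⟨2/d, by rintro x ⟨p, hp, rfl⟩; exact hbdel p hp⟩
  · exact ⟨4*(j:ℝ)/d^2, by rintro x ⟨p, hp, rfl⟩; exact hbom p hp⟩
  · -- the norm bound
    have h0 : n0 K f ≤ 1 + 1/d :=
      Real.sSup_le (by rintro x ⟨q, hq, rfl⟩; exact hbf q hq) (by positivity)
    have h1 : n0 K (fun z => ε * gAux j z) ≤ 2*(j:ℝ)/d^2 :=
      Real.sSup_le (by rintro x ⟨q, hq, rfl⟩; exact hbg q hq) (by positivity)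
    have h2 : ndel K f ≤ 2/d :=
      Real.sSup_le (by rintro x ⟨p, hp, rfl⟩; exact hbdel p hp) (by positivity)
    have h3 : n2 K f (fun z => ε * gAux j z) ≤ 4*(j:ℝ)/d^2 :=
      Real.sSup_le (by rintro x ⟨p, hp, rfl⟩; exact hbom p hp) (by positivity)
    have hdel2 : 2/d ≤ 2*(j:ℝ)/d^2 := by
      rw [div_le_div_iff₀ hd0 (by positivity)]
      have a1 : d*d ≤ d := by nlinarith
      have a2 : d ≤ (j:ℝ)*d := by
        have h8 : (1:ℝ) ≤ (j:ℝ) := by exact_mod_cast hj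
        nlinarith [mul_le_mul_of_nonneg_right h8 hd0.le]
      nlinarith
    have hmax : max (n0 K (fun z => ε * gAux j z)) (ndel K f) ≤ 2*(j:ℝ)/d^2 :=
      max_le h1 (le_trans h2 hdel2)
    have hu : 2 ≤ 1/d := by
      rw [le_div_iff₀ hd0]
      linarith
    have hu0 : 0 < 1/d := by positivity
    have hsq : 1/d^2 = (1/d)^2 := by
      field_simp
    have htot : (1 + 1/d) + 2*(j:ℝ)/d^2 + 4*(j:ℝ)/d^2 ≤ 7*(j:ℝ)/d^2 := by
      have hjd : (1:ℝ) + 1/d ≤ (j:ℝ)/d^2 := by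
        rw [le_div_iff₀ (by positivity : (0:ℝ) < d^2)]
        have h7 : (1 + 1/d)*d^2 = d^2 + d := by field_simp
        rw [h7]
        have h8 : (1:ℝ) ≤ (j:ℝ) := by exact_mod_cast hj
        nlinarith
      have heq : 2*(j:ℝ)/d^2 + 4*(j:ℝ)/d^2 = 6*(j:ℝ)/d^2 := by ring
      have heq2 : (j:ℝ)/d^2 + 6*(j:ℝ)/d^2 = 7*(j:ℝ)/d^2 := by ring
      linarith
    have hfinal : 7*(j:ℝ)/d^2 = 7 * M^2 * (j:ℝ)^(3+2*τ:ℝ) := by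
      have hexp : (j:ℝ)^((3:ℝ)+2*τ) = (j:ℝ) * ((j:ℝ)^(1+τ:ℝ) * (j:ℝ)^(1+τ:ℝ)) := by
        rw [show (3:ℝ)+2*τ = 1 + ((1+τ)+(1+τ)) by ring, Real.rpow_add hj0,
          Real.rpow_add hj0, Real.rpow_one]
      rw [hddef, hexp]
      have hjr0 : (0:ℝ) < (j:ℝ)^(1+τ:ℝ) := by positivity
      field_simp
    rw [c1Norm]
    calc n0 K f + max (n0 K (fun z => ε * gAux j z)) (ndel K f)
          + n2 K f (fun z => ε * gAux j z)
        ≤ (1 + 1/d) + 2*(j:ℝ)/d^2 + 4*(j:ℝ)/d^2 := by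
          have := add_le_add (add_le_add h0 hmax) h3
          linarith
      _ ≤ 7*(j:ℝ)/d^2 := htot
      _ = 7 * M^2 * (j:ℝ)^(3+2*τ:ℝ) := hfinal

end AuxProof

/-- For `τ > 0`, `M > 2ζ(1+τ)` and `k ∈ ℤ∖{0}`, the function
`λ_k(q) = 1/(q^k−1)` (extended continuously to `0` and `∞`) is `C¹`-holomorphic
on `K_M` (i.e. in both charts `q` and `ξ = 1/q`) with
`‖λ_k‖_{K_M} ≤ 7M²|k|^{3+2τ}`. -/
theorem lamk_c1Hol_bound (τ M : ℝ) (hτ : 0 < τ) (hM : 2 * zetaR (1 + τ) < M)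
    (k : ℤ) (hk : k ≠ 0) :
    ∃ g h : ℂ → ℂ,
      IsC1HolPair (finPart (KM τ M)) (fun q : ℂ => lamk k (q : OnePoint ℂ)) g ∧
      C1Bdd (finPart (KM τ M)) (fun q : ℂ => lamk k (q : OnePoint ℂ)) g ∧
      IsC1HolPair (infPart (KM τ M)) (fun ξ : ℂ => lamk k (sphChart ξ)) h ∧
      C1Bdd (infPart (KM τ M)) (fun ξ : ℂ => lamk k (sphChart ξ)) h ∧
      max (c1Norm (finPart (KM τ M)) (fun q : ℂ => lamk k (q : OnePoint ℂ)) g)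
          (c1Norm (infPart (KM τ M)) (fun ξ : ℂ => lamk k (sphChart ξ)) h) ≤
        7 * M ^ 2 * (|k| : ℝ) ^ (3 + 2 * τ) := by
  set j := k.natAbs with hjdef
  have hj : 1 ≤ j := by omega
  have habs : |(k:ℝ)| = (j:ℝ) := by
    rw [← Int.cast_abs, Int.abs_eq_natAbs, Int.cast_natCast]
  have hfun2 : (fun ξ : ℂ => lamk k (sphChart ξ))
      = (fun ξ : ℂ => lamk (-k) (ξ : OnePoint ℂ)) := funext (lamk_sph k hk)
  rw [infPart_KM τ M, hfun2, habs]
  have hKne := KM_pow_ne τ M hτ hM j hj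
  rcases hk.lt_or_gt with hneg | hpos
  · have hkj : k = -(j:ℤ) := by omega
    have hf1 : ∀ z ∈ finPart (KM τ M),
        (fun q : ℂ => lamk k (q : OnePoint ℂ)) z = (-1) + (-1) * eAux j z := by
      intro z hz
      rw [hkj]
      exact lamk_neg_eq j hj z (hKne z hz)
    have hf2 : ∀ z ∈ finPart (KM τ M),
        (fun q : ℂ => lamk (-k) (q : OnePoint ℂ)) z = 0 + 1 * eAux j z := by
      intro z hz
      rw [hkj, neg_neg]
      exact lamk_pos_eq j hj z
    obtain ⟨hp1, hb1, hn1⟩ := main_aux τ M hτ hM j hj (-1) (-1) (by simp) (by simp) _ hf1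
    obtain ⟨hp2, hb2, hn2⟩ := main_aux τ M hτ hM j hj 0 1 (by simp) (by simp) _ hf2
    exact ⟨_, _, hp1, hb1, hp2, hb2, max_le hn1 hn2⟩
  · have hkj : k = (j:ℤ) := by omega
    have hf1 : ∀ z ∈ finPart (KM τ M),
        (fun q : ℂ => lamk k (q : OnePoint ℂ)) z = 0 + 1 * eAux j z := by
      intro z hz
      rw [hkj]
      exact lamk_pos_eq j hj z
    have hf2 : ∀ z ∈ finPart (KM τ M),
        (fun q : ℂ => lamk (-k) (q : OnePoint ℂ)) z = (-1) + (-1) * eAux j z := by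
      intro z hz
      rw [hkj]
      exact lamk_neg_eq j hj z (hKne z hz)
    obtain ⟨hp1, hb1, hn1⟩ := main_aux τ M hτ hM j hj 0 1 (by simp) (by simp) _ hf1
    obtain ⟨hp2, hb2, hn2⟩ := main_aux τ M hτ hM j hj (-1) (-1) (by simp) (by simp) _ hf2
    exact ⟨_, _, hp1, hb1, hp2, hb2, max_le hn1 hn2⟩
end
end

section
/- Let τ > 0 and M > 2ζ(1+τ). For every k ∈ ℤ∖{0} and every ω ∈ A_M^ℂ, one has |e^{2πikω} − 1| ≥ 1/(√2 · M · |k|^{1+τ}); equivalently, |1/(q^k − 1)| ≤ √2 M |k|^{1+τ} for all q ∈ E(A_M^ℂ). -/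
noncomputable section

lemma one_le_zetaR_s6 (τ : ℝ) (hτ : 0 < τ) : 1 ≤ zetaR (1 + τ) := by
  have h0 : Summable (fun n : ℕ => 1 / ((n : ℝ)) ^ (1 + τ)) :=
    Real.summable_one_div_nat_rpow.mpr (by linarith)
  have hsum : Summable (fun n : ℕ => 1 / ((n : ℝ) + 1) ^ (1 + τ)) := by
    have := (summable_nat_add_iff 1).mpr h0
    refine this.congr fun n => ?_
    push_cast
    ring_nf
  have h1 : (fun n : ℕ => 1 / ((n : ℝ) + 1) ^ (1 + τ)) 0 = 1 := by
    simp [Real.one_rpow]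
  calc (1:ℝ) = 1 / ((0:ℕ) + 1 : ℝ) ^ (1 + τ) := by simp
    _ ≤ zetaR (1 + τ) := Summable.le_tsum hsum 0 (fun i _ => by positivity)

/-- The purely analytic core inequality. -/
lemma core_calc (ε v a : ℝ) (hε0 : 0 < ε) (hε2 : ε ≤ 1/2) (ha0 : 0 ≤ a)
    (ha : ε - |v| ≤ a) :
    ε^2/2 ≤ (Real.exp (-(2*Real.pi*v)) - 1)^2
      + 4 * Real.exp (-(2*Real.pi*v)) * (2*a)^2 := by
  have hπ : (3:ℝ) < Real.pi := Real.pi_gt_three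
  set r := Real.exp (-(2*Real.pi*v)) with hr
  have hr0 : 0 < r := Real.exp_pos _
  rcases le_or_gt v 0 with hv | hv
  · have habs : |v| = -v := abs_of_nonpos hv
    have hr1 : 1 + 2*Real.pi*(-v) ≤ r := by
      have := Real.add_one_le_exp (-(2*Real.pi*v))
      linarith
    rcases le_or_gt (ε/2) (-v) with hc | hc
    · have h1 : 3*ε ≤ r - 1 := by nlinarith
      nlinarith [mul_nonneg (mul_nonneg (by norm_num : (0:ℝ) ≤ 4) hr0.le) (sq_nonneg (2*a))]
    · have haε : ε/2 ≤ a := by rw [habs] at ha; linarith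
      have hr2 : 1 ≤ r := by nlinarith
      nlinarith [sq_nonneg (r-1)]
  · set s := 2*Real.pi*v with hs
    have hs0 : 0 < s := by positivity
    have hrs : r * (1 + s) ≤ 1 := by
      have h1 : 1 + s ≤ Real.exp s := by have := Real.add_one_le_exp s; linarith
      have h2 : r * Real.exp s = 1 := by
        rw [hr, ← Real.exp_add]; simp [hs]
      nlinarith
    rcases le_or_gt 1 s with hc1 | hc1
    · have hrhalf : r ≤ 1/2 := by nlinarith
      nlinarith [mul_nonneg (mul_nonneg (by norm_num : (0:ℝ) ≤ 4) hr0.le) (sq_nonneg (2*a))]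
    · rcases le_or_gt (ε/2) v with hc | hc
      · have hsε : 3*ε ≤ s := by nlinarith
        have h1 : (1+s)*(1-r) ≥ s := by nlinarith
        have h2 : 1 - r ≥ s/2 := by nlinarith
        nlinarith [mul_nonneg (mul_nonneg (by norm_num : (0:ℝ) ≤ 4) hr0.le) (sq_nonneg (2*a))]
      · have haε : ε/2 ≤ a := by
          rw [abs_of_pos hv] at ha; linarith
        have hrq : 1/4 ≤ r := by
          have h1 : Real.exp (-1 : ℝ) ≤ r := by
            rw [hr]; exact Real.exp_le_exp.mpr (by nlinarith)
          have h2 : Real.exp (1:ℝ) < 2.7182818286 := Real.exp_one_lt_d9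
          have h3 : Real.exp (-1:ℝ) = (Real.exp 1)⁻¹ := by
            rw [← Real.exp_neg]
          have h4 : (0:ℝ) < Real.exp 1 := Real.exp_pos 1
          rw [h3] at h1
          have h5 : (4:ℝ)⁻¹ ≤ (Real.exp 1)⁻¹ := by
            apply inv_anti₀ h4; linarith
          norm_num at h5; linarith
        nlinarith [sq_nonneg (r-1)]


/-- Diophantine estimate for integer multiples. -/
lemma dio_mul (τ M : ℝ) (hM : 0 < M) (ω₀ : ℝ) (hω₀ : ω₀ ∈ AMR τ M)
    (k : ℤ) (hk : k ≠ 0) (n : ℤ) :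
    1 / (M * |(k:ℝ)| ^ (1 + τ)) ≤ |(k:ℝ) * ω₀ - n| := by
  set m : ℕ := k.natAbs with hm
  have hm0 : 0 < m := Int.natAbs_pos.mpr hk
  have hmr : (m:ℝ) = |(k:ℝ)| := by
    rw [hm]; push_cast [Nat.cast_natAbs]; norm_num
  have hmpos : (0:ℝ) < m := by exact_mod_cast hm0
  -- find n' with |k ω₀ - n| = m * |ω₀ - n'/m|
  obtain ⟨n', hn'⟩ : ∃ n' : ℤ, |(k:ℝ) * ω₀ - n| = (m:ℝ) * |ω₀ - n'/m| := by
    rcases hk.lt_or_gt with hneg | hpos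
    · refine ⟨-n, ?_⟩
      have hkm : (k:ℝ) = -(m:ℝ) := by
        rw [hmr]; rw [abs_of_neg (by exact_mod_cast hneg : (k:ℝ) < 0)]; ring
      rw [show (k:ℝ) * ω₀ - n = -((m:ℝ) * (ω₀ - ((-n : ℤ) : ℝ)/m)) by
        push_cast [hkm]; field_simp; ring]
      rw [abs_neg, abs_mul, abs_of_pos hmpos]
    · refine ⟨n, ?_⟩
      have hkm : (k:ℝ) = (m:ℝ) := by
        rw [hmr]; rw [abs_of_pos (by exact_mod_cast hpos : (0:ℝ) < k)]
      rw [show (k:ℝ) * ω₀ - n = (m:ℝ) * (ω₀ - (n : ℝ)/m) by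
        rw [hkm]; field_simp]
      rw [abs_mul, abs_of_pos hmpos]
  have h1 := hω₀ n' m hm0
  have hsplit : (m:ℝ) ^ (2 + τ) = (m:ℝ) * (m:ℝ) ^ (1 + τ) := by
    rw [show (2 + τ) = 1 + (1 + τ) by ring, Real.rpow_add hmpos, Real.rpow_one]
  have hrp : (0:ℝ) < (m:ℝ) ^ (1 + τ) := Real.rpow_pos_of_pos hmpos _
  have hM0 : M ≠ 0 := ne_of_gt hM
  have hm0' : (m:ℝ) ≠ 0 := ne_of_gt hmpos
  have hrp0 : (m:ℝ) ^ (1 + τ) ≠ 0 := ne_of_gt hrp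
  rw [hn', ← hmr]
  calc 1 / (M * (m:ℝ) ^ (1 + τ)) = (m:ℝ) * (1 / (M * (m:ℝ) ^ (2 + τ))) := by
        rw [hsplit]; field_simp
    _ ≤ (m:ℝ) * |ω₀ - n'/m| := mul_le_mul_of_nonneg_left h1 hmpos.le

lemma norm_sq_exp_sub_one (k : ℤ) (ω : ℂ) :
    ‖Complex.exp (2*Real.pi*Complex.I*k*ω) - 1‖^2
      = (Real.exp (-(2*Real.pi*((k:ℝ)*ω.im))) - 1)^2
        + 4 * Real.exp (-(2*Real.pi*((k:ℝ)*ω.im)))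
            * Real.sin (Real.pi*((k:ℝ)*ω.re))^2 := by
  set w : ℂ := 2*Real.pi*Complex.I*k*ω with hw
  have hre : w.re = -(2*Real.pi*((k:ℝ)*ω.im)) := by
    rw [hw]; simp [Complex.mul_re, Complex.mul_im]; ring
  have him : w.im = 2*(Real.pi*((k:ℝ)*ω.re)) := by
    rw [hw]; simp [Complex.mul_re, Complex.mul_im]; ring
  have h1 : ‖Complex.exp w - 1‖^2 = ((Complex.exp w).re - 1)^2 + (Complex.exp w).im^2 := by
    rw [Complex.sq_norm, Complex.normSq_apply]
    simp [Complex.sub_re, Complex.sub_im]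
    ring
  rw [h1, Complex.exp_re, Complex.exp_im, hre, him,
    Real.cos_two_mul, Real.sin_two_mul]
  have hpyth := Real.sin_sq_add_cos_sq (Real.pi*((k:ℝ)*ω.re))
  set r := Real.exp (-(2*Real.pi*((k:ℝ)*ω.im)))
  set c := Real.cos (Real.pi*((k:ℝ)*ω.re))
  set sφ := Real.sin (Real.pi*((k:ℝ)*ω.re))
  linear_combination (4*r*(r*c^2 - 1) - 2*r*(r-1) - 2*r + 2*r^2) * hpyth

lemma sin_ge (t : ℝ) : (2 * |t - round t|)^2 ≤ Real.sin (Real.pi * t)^2 := by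
  set n := round t with hn
  set a := |t - n| with ha
  have ha0 : 0 ≤ a := abs_nonneg _
  have ha2 : a ≤ 1/2 := abs_sub_round t
  have hπ : (0:ℝ) < Real.pi := Real.pi_pos
  have h1 : Real.sin (Real.pi * t) ^ 2 = Real.sin (Real.pi * (t - n)) ^ 2 := by
    have heq : Real.pi * t = Real.pi * (t - n) + n * Real.pi := by ring
    rw [heq, Real.sin_add_int_mul_pi, mul_pow]
    have hsq : ((-1:ℝ)^n)^2 = 1 := by
      rcases Int.even_or_odd n with he | ho
      · rw [he.neg_one_zpow]; norm_num
      · rw [ho.neg_one_zpow]; norm_num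
    rw [hsq, one_mul]
  have h2 : Real.sin (Real.pi * (t - n)) ^ 2 = Real.sin (Real.pi * a) ^ 2 := by
    rw [ha]
    rcases abs_cases (t - (n:ℝ)) with ⟨h, _⟩ | ⟨h, _⟩
    · rw [h]
    · rw [h, show Real.pi * -(t - (n:ℝ)) = -(Real.pi * (t - (n:ℝ))) by ring,
        Real.sin_neg]
      ring
  have h3 : 2 * a ≤ Real.sin (Real.pi * a) := by
    have := Real.mul_le_sin (x := Real.pi * a) (by positivity) (by nlinarith)
    calc 2 * a = 2 / Real.pi * (Real.pi * a) := by field_simp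
      _ ≤ Real.sin (Real.pi * a) := this
  rw [h1, h2]
  have h4 : 0 ≤ 2 * a := by linarith
  calc (2*a)^2 ≤ Real.sin (Real.pi * a)^2 := by nlinarith
    _ = Real.sin (Real.pi * a)^2 := rfl

/-- For `τ > 0`, `M > 2ζ(1+τ)`, every `k ∈ ℤ∖{0}` and every
`ω ∈ A_M^ℂ` one has `|e^{2πikω} − 1| ≥ 1/(√2 · M · |k|^{1+τ})`; equivalently
`|1/(q^k − 1)| ≤ √2·M·|k|^{1+τ}` for all `q ∈ E(A_M^ℂ)`. -/
theorem small_divisor_bound_on_AMC (τ M : ℝ) (hτ : 0 < τ) (hM : 2 * zetaR (1 + τ) < M) :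
    (∀ k : ℤ, k ≠ 0 → ∀ ω ∈ AMC τ M,
      1 / (Real.sqrt 2 * M * (|k| : ℝ) ^ (1 + τ)) ≤
        ‖Complex.exp (2 * Real.pi * Complex.I * k * ω) - 1‖) ∧
    (∀ k : ℤ, k ≠ 0 → ∀ q ∈ Efn '' AMC τ M,
      ‖(q ^ k - 1)⁻¹‖ ≤ Real.sqrt 2 * M * (|k| : ℝ) ^ (1 + τ)) := by
  have hz1 : 1 ≤ zetaR (1 + τ) := one_le_zetaR_s6 τ hτ
  have hM2 : (2:ℝ) < M := by linarith
  have hM0 : (0:ℝ) < M := by linarith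
  have hKfact : ∀ k : ℤ, k ≠ 0 → 1 ≤ |(k:ℝ)| ^ (1 + τ) := by
    intro k hk
    have h1 : (1:ℝ) ≤ |(k:ℝ)| := by
      have : 1 ≤ |k| := Int.one_le_abs (by exact_mod_cast hk)
      calc (1:ℝ) = ((1:ℤ):ℝ) := by norm_num
        _ ≤ ((|k| : ℤ) : ℝ) := by exact_mod_cast this
        _ = |(k:ℝ)| := by push_cast; ring
    exact Real.one_le_rpow h1 (by linarith)
  have main : ∀ k : ℤ, k ≠ 0 → ∀ ω ∈ AMC τ M,
      1 / (Real.sqrt 2 * M * (|k| : ℝ) ^ (1 + τ)) ≤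
        ‖Complex.exp (2 * Real.pi * Complex.I * k * ω) - 1‖ := by
    intro k hk ω hω
    obtain ⟨ω₀, hω₀, hclose⟩ := hω
    have hK1 := hKfact k hk
    set K : ℝ := |(k:ℝ)| ^ (1 + τ) with hKdef
    have hK0 : (0:ℝ) < K := by linarith
    set ε : ℝ := 1 / (M * K) with hεdef
    have hMK : (2:ℝ) < M * K := by nlinarith
    have hε0 : 0 < ε := by positivity
    have hε2 : ε ≤ 1/2 := by
      rw [hεdef]
      rw [div_le_div_iff₀ (by linarith) (by norm_num)]
      linarith
    set n : ℤ := round ((k:ℝ) * ω.re) with hn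
    set a : ℝ := |(k:ℝ) * ω.re - n| with ha
    have hdio : ε ≤ |(k:ℝ) * ω₀ - n| := by
      exact dio_mul τ M hM0 ω₀ hω₀ k hk n
    have hav : ε - |(k:ℝ) * ω.im| ≤ a := by
      have h1 : |(k:ℝ) * ω₀ - n| ≤ |(k:ℝ) * ω₀ - (k:ℝ) * ω.re| + a := by
        rw [ha]; exact abs_sub_le _ _ _
      have h2 : |(k:ℝ) * ω₀ - (k:ℝ) * ω.re| = |(k:ℝ)| * |ω₀ - ω.re| := by
        rw [← abs_mul]; congr 1; ring
      have h3 : |(k:ℝ)| * |ω₀ - ω.re| ≤ |(k:ℝ)| * |ω.im| :=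
        mul_le_mul_of_nonneg_left hclose (abs_nonneg _)
      have h4 : |(k:ℝ)| * |ω.im| = |(k:ℝ) * ω.im| := (abs_mul _ _).symm
      linarith
    have hcore := core_calc ε ((k:ℝ) * ω.im) a hε0 hε2 (abs_nonneg _) hav
    have hsin := sin_ge ((k:ℝ) * ω.re)
    have hns := norm_sq_exp_sub_one k ω
    have hr0 : (0:ℝ) < Real.exp (-(2*Real.pi*((k:ℝ)*ω.im))) := Real.exp_pos _
    set N : ℝ := ‖Complex.exp (2 * Real.pi * Complex.I * k * ω) - 1‖ with hN
    have hbig : ε^2/2 ≤ N^2 := by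
      rw [hN, hns]
      rw [← hn] at hsin
      nlinarith [hsin, hr0.le]
    have hs2 : (0:ℝ) < Real.sqrt 2 := Real.sqrt_pos.mpr (by norm_num)
    have hsq2 : Real.sqrt 2 ^ 2 = 2 := Real.sq_sqrt (by norm_num)
    have hCsq : (1 / (Real.sqrt 2 * M * K))^2 = ε^2/2 := by
      rw [hεdef]
      field_simp
      nlinarith [hsq2]
    calc 1 / (Real.sqrt 2 * M * K)
        = Real.sqrt ((1 / (Real.sqrt 2 * M * K))^2) := (Real.sqrt_sq (by positivity)).symm
      _ = Real.sqrt (ε^2/2) := by rw [hCsq]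
      _ ≤ Real.sqrt (N^2) := Real.sqrt_le_sqrt hbig
      _ = N := Real.sqrt_sq (by rw [hN]; positivity)
  refine ⟨main, ?_⟩
  intro k hk q hq
  obtain ⟨ω, hω, rfl⟩ := hq
  have hK1 := hKfact k hk
  have h := main k hk ω hω
  have hqk : Efn ω ^ k = Complex.exp (2 * Real.pi * Complex.I * k * ω) := by
    rw [Efn, ← Complex.exp_int_mul]
    congr 1
    ring
  have hC : (0:ℝ) < Real.sqrt 2 * M * |(k:ℝ)| ^ (1 + τ) := by
    have hs2 : (0:ℝ) < Real.sqrt 2 := Real.sqrt_pos.mpr (by norm_num)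
    have : (0:ℝ) < |(k:ℝ)| ^ (1 + τ) := by linarith
    positivity
  rw [hqk, norm_inv]
  have h' : (Real.sqrt 2 * M * |(k:ℝ)| ^ (1 + τ))⁻¹ ≤
      ‖Complex.exp (2 * Real.pi * Complex.I * k * ω) - 1‖ := by
    rw [← one_div]; exact h
  have := inv_anti₀ (by positivity) h'
  rwa [inv_inv] at this
end
end

section
/- For every z ∈ ℂ with |Im z| ≤ 1/2, one has |e^{2πiz} − 1| ≥ dist(z, ℤ), where dist(z,ℤ) := inf{|z − n| : n ∈ ℤ}. -/
open Real

lemma core_y (y : ℝ) (hy : |y| ≤ 1 / 2) :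
    y ^ 2 ≤ (Real.exp (-(2 * π * y)) - 1) ^ 2 := by
  set t := Real.exp (-(2 * π * y)) with ht
  have hπ : (3 : ℝ) ≤ π := by linarith [Real.pi_gt_three]
  rcases le_or_gt 0 y with h0 | h0
  · -- 1 - t ≥ y
    have hy2 : y ≤ 1 / 2 := (abs_le.mp hy).2
    have he : 2 * π * y + 1 ≤ Real.exp (2 * π * y) := Real.add_one_le_exp _
    have hte : t * Real.exp (2 * π * y) = 1 := by
      rw [ht, ← Real.exp_add]; simp
    have htpos : 0 < t := Real.exp_pos _
    have hee : 0 < Real.exp (2 * π * y) := Real.exp_pos _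
    have hstep : (1 : ℝ) ≤ (1 - y) * Real.exp (2 * π * y) := by
      have h2 : (1 + 2 * π * y) * (1 - y) ≥ 1 := by nlinarith [mul_nonneg h0 (show (0:ℝ) ≤ 2 * π - 1 - 2 * π * y by nlinarith)]
      nlinarith [mul_le_mul_of_nonneg_left he (by linarith : (0:ℝ) ≤ 1 - y)]
    have h1 : y ≤ 1 - t := by nlinarith
    nlinarith
  · have he : -(2 * π * y) + 1 ≤ t := Real.add_one_le_exp _
    have hny : 0 ≤ -y := by linarith
    have h1 : -y ≤ t - 1 := by nlinarith
    calc y ^ 2 = (-y) ^ 2 := by ring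
      _ ≤ (t - 1) ^ 2 := pow_le_pow_left₀ hny h1 2

lemma core (x y : ℝ) (hx : |x| ≤ 1 / 2) (hy : |y| ≤ 1 / 2) :
    x ^ 2 + y ^ 2 ≤ (Real.exp (-(2 * π * y)) - 1) ^ 2
      + 4 * Real.exp (-(2 * π * y)) * Real.sin (π * x) ^ 2 := by
  set t := Real.exp (-(2 * π * y)) with ht
  have hy2 := core_y y hy
  have htpos : 0 < t := Real.exp_pos _
  have hs : (2 * x) ^ 2 ≤ Real.sin (π * x) ^ 2 := by
    have hπ : 0 < π := Real.pi_pos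
    rcases le_or_gt 0 x with h0 | h0
    · have h1 : 2 / π * (π * x) ≤ Real.sin (π * x) :=
        Real.mul_le_sin (by positivity) (by
          rw [abs_le] at hx; nlinarith)
      have : 2 * x = 2 / π * (π * x) := by field_simp
      rw [this]
      have h2 : 0 ≤ 2 / π * (π * x) := by positivity
      nlinarith
    · have hx' : |(-x)| ≤ 1 / 2 := by rwa [abs_neg]
      have h1 : 2 / π * (π * (-x)) ≤ Real.sin (π * (-x)) :=
        Real.mul_le_sin (by nlinarith) (by
          rw [abs_le] at hx'; nlinarith)
      rw [mul_neg, Real.sin_neg] at h1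
      have : 2 * (-x) = 2 / π * (π * x) * (-1) := by field_simp
      nlinarith
  rcases le_or_gt (1 / 16 : ℝ) t with hc | hc
  · nlinarith [sq_nonneg (Real.sin (π * x))]
  · have hx2 : x ^ 2 ≤ 1 / 4 := by rw [abs_le] at hx; nlinarith
    have hy4 : y ^ 2 ≤ 1 / 4 := by rw [abs_le] at hy; nlinarith
    nlinarith [sq_nonneg (Real.sin (π * x))]

/-- For every `z ∈ ℂ` with `|Im z| ≤ 1/2`, one has
`|e^{2πiz} − 1| ≥ dist(z, ℤ)`, where `dist(z,ℤ)` is the distance in `ℂ`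
from `z` to the set of integers. -/
theorem exp_sub_one_ge_dist_int (z : ℂ) (hz : |z.im| ≤ 1 / 2) :
    Metric.infDist z (Set.range ((↑·) : ℤ → ℂ)) ≤
      ‖Complex.exp (2 * Real.pi * Complex.I * z) - 1‖ := by
  set n : ℤ := round z.re with hn
  have hmem : (n : ℂ) ∈ Set.range ((↑·) : ℤ → ℂ) := ⟨n, rfl⟩
  refine le_trans (Metric.infDist_le_dist_of_mem hmem) ?_
  set w : ℂ := z - (n : ℂ) with hw
  have hwre : |w.re| ≤ 1 / 2 := by
    simpa [hw] using abs_sub_round z.re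
  have hwim : w.im = z.im := by simp [hw]
  have hexp : Complex.exp (2 * Real.pi * Complex.I * z)
      = Complex.exp (2 * Real.pi * Complex.I * w) := by
    have hzw : z = w + (n : ℂ) := by ring
    rw [hzw, show 2 * (Real.pi : ℂ) * Complex.I * (w + n)
        = 2 * (Real.pi : ℂ) * Complex.I * w + n * (2 * Real.pi * Complex.I) by ring,
      Complex.exp_add, Complex.exp_int_mul_two_pi_mul_I, mul_one]
  rw [hexp, dist_eq_norm, ← hw]
  refine le_of_pow_le_pow_left₀ two_ne_zero (norm_nonneg _) ?_
  have key := core w.re w.im hwre (hwim ▸ hz)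
  have hA : (2 * (Real.pi : ℂ) * Complex.I * w).re = -(2 * Real.pi * w.im) := by
    simp [Complex.mul_re, Complex.mul_im]
  have hB : (2 * (Real.pi : ℂ) * Complex.I * w).im = 2 * Real.pi * w.re := by
    simp [Complex.mul_re, Complex.mul_im]
  have hcos : Real.cos (2 * Real.pi * w.re) = 1 - 2 * Real.sin (Real.pi * w.re) ^ 2 := by
    rw [show 2 * Real.pi * w.re = 2 * (Real.pi * w.re) by ring, Real.cos_two_mul,
      Real.cos_sq']
    ring
  have hnorm1 : ‖w‖ ^ 2 = w.re ^ 2 + w.im ^ 2 := by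
    rw [Complex.sq_norm, Complex.normSq_apply]; ring
  have hnorm2 : ‖Complex.exp (2 * Real.pi * Complex.I * w) - 1‖ ^ 2
      = (Real.exp (-(2 * Real.pi * w.im)) - 1) ^ 2
        + 4 * Real.exp (-(2 * Real.pi * w.im)) * Real.sin (Real.pi * w.re) ^ 2 := by
    rw [Complex.sq_norm, Complex.normSq_apply, Complex.sub_re, Complex.sub_im,
      Complex.exp_re, Complex.exp_im, hA, hB, hcos, Complex.one_re, Complex.one_im]
    have hsc := Real.sin_sq_add_cos_sq (2 * Real.pi * w.re)
    rw [show Real.cos (2 * Real.pi * w.re) = 1 - 2 * Real.sin (Real.pi * w.re) ^ 2 from hcos]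
      at hsc
    linear_combination (Real.exp (-(2 * Real.pi * w.im))) ^ 2 * hsc
  rw [hnorm1, hnorm2]
  exact key
end
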